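/- arXiv:2202.02594 — 5 statements merged into one kernel-verified Lean document; each statement's English description precedes it below -/
import Mathlib

section
/- Let L : C ⇄ D : i be a Bousfield localisation and let S be the class of morphisms of C sent to isomorphisms by L. Then for every category E, precomposition with L induces an equivalence between the functor category Fun(D, E) and the full subcategory of Fun(C, E) spanned by functors sending every morphism in S to an isomorphism. -/
open CategoryTheory

universe v₁ v₂ v₃ u₁ u₂ u₃

/-- Let `L ⊣ i` be a Bousfield localisation (`i` fully faithful) and let `S` be
the class of morphisms of `C` inverted by `L`.  Then for every category `E`, precomposition with
`L` induces an equivalence of `Fun(D, E)` with the full subcategory of `Fun(C, E)` spanned by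
functors inverting every morphism of `S`. -/
theorem stmt3 {C : Type u₁} {D : Type u₂} {E : Type u₃}
    [Category.{v₁} C] [Category.{v₂} D] [Category.{v₃} E]
    (L : C ⥤ D) (i : D ⥤ C) [i.Full] [i.Faithful] (adj : L ⊣ i) :
    (ObjectProperty.lift
      (fun F : C ⥤ E => ∀ {X Y : C} (f : X ⟶ Y), IsIso (L.map f) → IsIso (F.map f))
      ((Functor.whiskeringLeft C D E).obj L)
      (fun G {X Y} f hf => by
        haveI := hf
        exact inferInstanceAs (IsIso (G.map (L.map f))))).IsEquivalence := by
  letI W := (MorphismProperty.isomorphisms D).inverseImage L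
  haveI : L.IsLocalization W := adj.isLocalization
  set P : (C ⥤ E) → Prop :=
    fun F : C ⥤ E => ∀ {X Y : C} (f : X ⟶ Y), IsIso (L.map f) → IsIso (F.map f)
  haveI hfull := Localization.full_whiskeringLeft L W E
  haveI hfaithful := Localization.faithful_whiskeringLeft L W E
  set G := ObjectProperty.lift P ((Functor.whiskeringLeft C D E).obj L)
      (fun G {X Y} f hf => by
        haveI := hf
        exact inferInstanceAs (IsIso (G.map (L.map f)))) with hG
  have hfaith : G.Faithful := ⟨fun {F₁ F₂ f g} h => by
    have h' := congrArg InducedCategory.Hom.hom h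
    exact ((Functor.whiskeringLeft C D E).obj L).map_injective h'⟩
  have hfullG : G.Full := ⟨fun {F₁ F₂} f => by
    exact ⟨((Functor.whiskeringLeft C D E).obj L).preimage f.hom, by
      apply ObjectProperty.hom_ext
      apply ((Functor.whiskeringLeft C D E).obj L).map_preimage⟩⟩
  have hess : G.EssSurj := by
    constructor
    rintro ⟨F, hF⟩
    have hinv : W.IsInvertedBy F := fun X Y f hf => hF f hf
    refine ⟨Localization.lift F hinv L, ⟨(ObjectProperty.ι P).preimageIso ?_⟩⟩
    exact Localization.fac F hinv L
  exact { full := hfullG, faithful := hfaith, essSurj := hess }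
end

section
/- Let C, D be categories. There is a canonical equivalence between the category of left adjoint functors D → C (with all natural transformations) and the opposite of the category of right adjoint functors C → D. -/
open CategoryTheory

universe v₁ v₂ u₁ u₂

section Aux

variable {C : Type u₁} {D : Type u₂} [Category.{v₁} C] [Category.{v₂} D]

/-- Chosen right adjoint of a left adjoint functor packaged in the full subcategory. -/
noncomputable def stmt6RA (F : ObjectProperty.FullSubcategory (fun F : D ⥤ C => F.IsLeftAdjoint)) :
    ObjectProperty.FullSubcategory fun G : C ⥤ D => G.IsRightAdjoint :=
  letI := F.property
  ⟨F.obj.rightAdjoint, ⟨⟨F.obj, ⟨Adjunction.ofIsLeftAdjoint F.obj⟩⟩⟩⟩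

/-- The chosen adjunction. -/
noncomputable def stmt6Adj (F : ObjectProperty.FullSubcategory (fun F : D ⥤ C => F.IsLeftAdjoint)) :
    F.obj ⊣ (stmt6RA F).obj :=
  letI := F.property
  Adjunction.ofIsLeftAdjoint F.obj

/-- The functor `LFun(D, C) ⥤ RFun(C, D)ᵒᵖ` taking each left adjoint to its right adjoint. -/
noncomputable def stmt6Fun :
    ObjectProperty.FullSubcategory (fun F : D ⥤ C => F.IsLeftAdjoint) ⥤
      (ObjectProperty.FullSubcategory fun G : C ⥤ D => G.IsRightAdjoint)ᵒᵖ where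
  obj F := Opposite.op (stmt6RA F)
  map {F G} τ := (ObjectProperty.homMk (conjugateEquiv (stmt6Adj G) (stmt6Adj F) τ.hom :
    (stmt6RA G).obj ⟶ (stmt6RA F).obj) : (stmt6RA G) ⟶ (stmt6RA F)).op
  map_id F := by
    have : (𝟙 F : F ⟶ F).hom = (𝟙 F.obj : F.obj ⟶ F.obj) := rfl
    dsimp
    rw [conjugateEquiv_id]
    rfl
  map_comp {F G H} τ σ :=
    congrArg (fun x => (ObjectProperty.homMk x).op)
      (conjugateEquiv_comp (stmt6Adj H) (stmt6Adj G) (stmt6Adj F) σ.hom τ.hom).symm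

noncomputable def stmt6FF : (stmt6Fun (C := C) (D := D)).FullyFaithful where
  preimage {F G} f := ObjectProperty.homMk ((conjugateEquiv (stmt6Adj G) (stmt6Adj F)).symm f.unop.hom)
  map_preimage {F G} f := by
    dsimp [stmt6Fun]
    congr 1
    exact ObjectProperty.hom_ext _ ((conjugateEquiv (stmt6Adj G) (stmt6Adj F)).apply_symm_apply f.unop.hom)
  preimage_map {F G} f :=
    ObjectProperty.hom_ext _ ((conjugateEquiv (stmt6Adj G) (stmt6Adj F)).symm_apply_apply _)

end Aux

/-- For categories `C, D` there is a canonical equivalence between the category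
`LFun(D, C)` of left adjoint functors `D ⥤ C` and the opposite of the category `RFun(C, D)` of
right adjoint functors `C ⥤ D`, sending a left adjoint functor to its right adjoint. -/
theorem stmt6 {C : Type u₁} {D : Type u₂} [Category.{v₁} C] [Category.{v₂} D] :
    ∃ e : ObjectProperty.FullSubcategory (fun F : D ⥤ C => F.IsLeftAdjoint) ≌
        (ObjectProperty.FullSubcategory fun G : C ⥤ D => G.IsRightAdjoint)ᵒᵖ,
      ∀ F : ObjectProperty.FullSubcategory fun F : D ⥤ C => F.IsLeftAdjoint,
        Nonempty (F.obj ⊣ (e.functor.obj F).unop.obj) := by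
  haveI : (stmt6Fun (C := C) (D := D)).Full := stmt6FF.full
  haveI : (stmt6Fun (C := C) (D := D)).Faithful := stmt6FF.faithful
  haveI : (stmt6Fun (C := C) (D := D)).EssSurj := by
    constructor
    intro G
    obtain ⟨L, ⟨adj⟩⟩ := G.unop.property
    refine ⟨⟨L, ⟨⟨G.unop.obj, ⟨adj⟩⟩⟩⟩, ⟨?_⟩⟩
    letI F' : ObjectProperty.FullSubcategory (fun F : D ⥤ C => F.IsLeftAdjoint) := ⟨L, ⟨⟨G.unop.obj, ⟨adj⟩⟩⟩⟩
    letI α := Adjunction.rightAdjointUniq adj (stmt6Adj F')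
    exact Iso.op (ObjectProperty.isoMk (P := _)
      { hom := (α.hom : G.unop.obj ⟶ (stmt6RA F').obj)
        inv := (α.inv : (stmt6RA F').obj ⟶ G.unop.obj)
        hom_inv_id := α.hom_inv_id
        inv_hom_id := α.inv_hom_id })
  haveI : (stmt6Fun (C := C) (D := D)).IsEquivalence := { }
  refine ⟨(stmt6Fun (C := C) (D := D)).asEquivalence, fun F => ⟨?_⟩⟩
  exact stmt6Adj F
end

section
/- Let C be a category, κ a regular cardinal, and P(C) the presheaf category on C. An object F of P(C) is κ-compact if and only if F is a retract of a κ-small colimit of representable presheaves. -/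
open CategoryTheory Limits Opposite

universe u

/-- A category `J` is `κ`-filtered if every `κ`-small diagram in `J` admits a cocone. -/
def KappaFiltered (κ : Cardinal.{u}) (J : Type u) [SmallCategory J] : Prop :=
  ∀ (A : Type u) [SmallCategory A], Cardinal.mk (Arrow A) < κ →
    ∀ F : A ⥤ J, Nonempty (Cocone F)

/-- An object `X` of `C` is `κ`-compact if `Hom(X, -)` preserves `κ`-filtered colimits. -/
def KappaCompact (κ : Cardinal.{u}) {C : Type*} [Category.{u} C] (X : C) : Prop :=
  ∀ (J : Type u) [SmallCategory J], KappaFiltered κ J →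
    ∀ (F : J ⥤ C) (c : Cocone F), Nonempty (IsColimit c) →
      Nonempty (IsColimit ((coyoneda.obj (op X)).mapCocone c))

namespace Stmt12Aux

variable {X Y : Type u}

/-- vertices of a bipartite quiver -/
structure BipV (_e : X → Y → Type u) : Type u where
  v : X ⊕ Y

instance bipQuiver (e : X → Y → Type u) : Quiver.{u} (BipV e) where
  Hom a b := match a.v, b.v with
    | Sum.inl x, Sum.inr y => e x y
    | _, _ => PEmpty

/-- free category on a bipartite quiver -/
abbrev BipCat (e : X → Y → Type u) : Type u := Paths (BipV e)

def bipEdge {e : X → Y → Type u} {x : X} {y : Y} (h : e x y) :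
    (⟨Sum.inl x⟩ : BipV e) ⟶ (⟨Sum.inr y⟩ : BipV e) := h

/-- a vertex, as an object of the path category -/
def bipIn {e : X → Y → Type u} (w : BipV e) : BipCat e := (Paths.of _).obj w

/-- an edge, as a morphism of the path category -/
def bipHom {e : X → Y → Type u} {x : X} {y : Y} (h : e x y) :
    bipIn (e := e) ⟨Sum.inl x⟩ ⟶ bipIn (e := e) ⟨Sum.inr y⟩ := (Paths.of _).map (bipEdge h)

lemma bip_arrow_card {e : X → Y → Type u} {κ : Cardinal.{u}} (hκ : Cardinal.aleph0 ≤ κ)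
    (hX : Cardinal.mk X < κ) (hY : Cardinal.mk Y < κ)
    (hE : Cardinal.mk (Σ x, Σ y, e x y) < κ) :
    Cardinal.mk (Arrow (BipCat e)) < κ := by
  have hsurj : Function.Surjective
      (fun v : (X ⊕ Y) ⊕ (Σ x, Σ y, e x y) => match v with
        | Sum.inl v => Arrow.mk (𝟙 (bipIn (e := e) ⟨v⟩))
        | Sum.inr ⟨x, y, h⟩ => Arrow.mk (bipHom h)) := by
    rintro ⟨l, r, p⟩
    change @Quiver.Path (BipV e) _ l r at p
    cases p with
    | nil => exact ⟨Sum.inl l.v, rfl⟩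
    | @cons b _ q ed =>
      rcases b with ⟨x | y⟩
      · rcases r with ⟨x' | y'⟩
        · exact ed.elim
        · cases q with
          | nil => exact ⟨Sum.inr ⟨x, y', ed⟩, rfl⟩
          | @cons m _ q' ed' => rcases m with ⟨m | m⟩ <;> exact ed'.elim
      · exact ed.elim
  have h1 : Cardinal.mk (Arrow (BipCat e)) ≤
      Cardinal.mk ((X ⊕ Y) ⊕ (Σ x, Σ y, e x y)) := Cardinal.mk_le_of_surjective hsurj
  refine h1.trans_lt ?_
  simp only [Cardinal.mk_sum, Cardinal.lift_id]
  exact Cardinal.add_lt_of_lt hκ (Cardinal.add_lt_of_lt hκ hX hY) hE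

/-- functor out of a bipartite path category -/
def bipFunctor {D : Type*} [Category D] (e : X → Y → Type u) (fX : X → D) (fY : Y → D)
    (fe : ∀ x y, e x y → (fX x ⟶ fY y)) : BipCat e ⥤ D :=
  Paths.lift
    { obj := fun v => Sum.elim fX fY v.v
      map := fun {a b} h => match a, b, h with
        | ⟨Sum.inl x⟩, ⟨Sum.inr y⟩, h => fe x y h }

@[simp] lemma bipFunctor_obj_inl {D : Type*} [Category D] (e : X → Y → Type u) (fX : X → D)
    (fY : Y → D) (fe : ∀ x y, e x y → (fX x ⟶ fY y)) (x : X) :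
    (bipFunctor e fX fY fe).obj ⟨Sum.inl x⟩ = fX x := rfl

@[simp] lemma bipFunctor_obj_inr {D : Type*} [Category D] (e : X → Y → Type u) (fX : X → D)
    (fY : Y → D) (fe : ∀ x y, e x y → (fX x ⟶ fY y)) (y : Y) :
    (bipFunctor e fX fY fe).obj ⟨Sum.inr y⟩ = fY y := rfl

@[simp] lemma bipFunctor_map_edge {D : Type*} [Category D] (e : X → Y → Type u) (fX : X → D)
    (fY : Y → D) (fe : ∀ x y, e x y → (fX x ⟶ fY y)) {x : X} {y : Y} (h : e x y) :
    (bipFunctor e fX fY fe).map (bipHom h) = fe x y h := by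
  simp only [bipFunctor, bipHom, bipEdge, bipIn]
  erw [Paths.lift_toPath]
  rfl

lemma kappaFiltered_bip {κ : Cardinal.{u}} (hκ : Cardinal.aleph0 ≤ κ) {J : Type u}
    [SmallCategory J] (hJ : KappaFiltered κ J) (e : X → Y → Type u)
    (hX : Cardinal.mk X < κ) (hY : Cardinal.mk Y < κ)
    (hE : Cardinal.mk (Σ x, Σ y, e x y) < κ)
    (fX : X → J) (fY : Y → J) (fe : ∀ x y, e x y → (fX x ⟶ fY y)) :
    ∃ (z : J) (pX : ∀ x, fX x ⟶ z) (pY : ∀ y, fY y ⟶ z),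
      ∀ x y (h : e x y), fe x y h ≫ pY y = pX x := by
  obtain ⟨c⟩ := hJ (BipCat e) (bip_arrow_card hκ hX hY hE) (bipFunctor e fX fY fe)
  refine ⟨c.pt, fun x => c.ι.app (bipIn ⟨Sum.inl x⟩), fun y => c.ι.app (bipIn ⟨Sum.inr y⟩),
    fun x y h => ?_⟩
  have := c.w (bipHom h)
  rw [bipFunctor_map_edge] at this
  exact this

end Stmt12Aux

namespace Stmt12Aux

lemma mk_lt_of_finite {T : Type u} [Finite T] {κ : Cardinal.{u}} (hκ : Cardinal.aleph0 ≤ κ) :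
    Cardinal.mk T < κ :=
  (Cardinal.lt_aleph0_of_finite T).trans_le hκ

lemma isFiltered_of_kappaFiltered {κ : Cardinal.{u}} (hκ : Cardinal.aleph0 ≤ κ) {J : Type u}
    [SmallCategory J] (hJ : KappaFiltered κ J) : IsFiltered J := by
  have h1 : ∀ A B : J, ∃ (Z : J) (_ : A ⟶ Z) (_ : B ⟶ Z), True := by
    intro A B
    obtain ⟨z, _, pY, -⟩ := kappaFiltered_bip hκ hJ (fun (_ : PEmpty.{u + 1}) (_ : ULift Bool) =>
      PEmpty.{u + 1}) (mk_lt_of_finite hκ) (mk_lt_of_finite hκ) (mk_lt_of_finite hκ)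
      PEmpty.elim (fun b => cond b.down A B) (fun x => x.elim)
    exact ⟨z, pY ⟨true⟩, pY ⟨false⟩, trivial⟩
  have h2 : ∀ ⦃A B : J⦄ (f g : A ⟶ B), ∃ (Z : J) (h : B ⟶ Z), f ≫ h = g ≫ h := by
    intro A B f g
    obtain ⟨z, pX, pY, hp⟩ := kappaFiltered_bip hκ hJ (fun (_ : PUnit.{u + 1}) (_ : PUnit.{u + 1})
      => ULift.{u} Bool) (mk_lt_of_finite hκ) (mk_lt_of_finite hκ) (mk_lt_of_finite hκ)
      (fun _ => A) (fun _ => B) (fun _ _ b => cond b.down f g)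
    exact ⟨z, pY ⟨⟩, (hp ⟨⟩ ⟨⟩ ⟨true⟩).trans (hp ⟨⟩ ⟨⟩ ⟨false⟩).symm⟩
  have h3 : Nonempty J := by
    obtain ⟨z, -, -, -⟩ := kappaFiltered_bip hκ hJ (fun (_ : PEmpty.{u + 1}) (_ : PEmpty.{u + 1})
      => PEmpty.{u + 1}) (mk_lt_of_finite hκ) (mk_lt_of_finite hκ) (mk_lt_of_finite hκ)
      PEmpty.elim PEmpty.elim (fun x => x.elim)
    exact ⟨z⟩
  exact { toIsFilteredOrEmpty := ⟨h1, h2⟩, nonempty := h3 }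

lemma paths_hom_ext {V : Type*} [Quiver V] {D : Type*} [Category D] (Ψ : Paths V ⥤ D) {pt : D}
    (f : ∀ v : Paths V, Ψ.obj v ⟶ pt)
    (hf : ∀ {a b : V} (q : a ⟶ b), Ψ.map ((Paths.of _).map q) ≫ f ((Paths.of _).obj b)
      = f ((Paths.of _).obj a)) :
    ∀ {a b : Paths V} (p : a ⟶ b), Ψ.map p ≫ f b = f a := by
  apply Paths.induction (P := fun {a b : Paths V} (p : a ⟶ b) => Ψ.map p ≫ f b = f a)
  · intro v
    simp
  · intro u v w p q ih
    rw [Functor.map_comp, Category.assoc, hf q, ih]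

/-- Build a cocone over a functor out of a path category from data on vertices and edges. -/
@[simps]
def pathsCocone {V : Type*} [Quiver V] {D : Type*} [Category D] (Ψ : Paths V ⥤ D) (pt : D)
    (f : ∀ v : Paths V, Ψ.obj v ⟶ pt)
    (hf : ∀ {a b : V} (q : a ⟶ b), Ψ.map ((Paths.of _).map q) ≫ f ((Paths.of _).obj b)
      = f ((Paths.of _).obj a)) : Cocone Ψ where
  pt := pt
  ι :=
    { app := f
      naturality := fun {a b} p => by
        rw [paths_hom_ext Ψ f @hf p]
        simp }

/-- A cocone which is a natural retract of a colimit cocone is a colimit cocone. -/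
def isColimitOfNatRetract {J : Type*} [Category J] {D : Type*} [Category D] {G₁ G₂ : J ⥤ D}
    {c₁ : Cocone G₁} {c₂ : Cocone G₂} (h₁ : IsColimit c₁)
    (ρ : G₁ ⟶ G₂) (σ : G₂ ⟶ G₁) (ρp : c₁.pt ⟶ c₂.pt) (σp : c₂.pt ⟶ c₁.pt)
    (hσρ : ∀ j, σ.app j ≫ ρ.app j = 𝟙 _)
    (hρ : ∀ j, ρ.app j ≫ c₂.ι.app j = c₁.ι.app j ≫ ρp)
    (hσ : ∀ j, σ.app j ≫ c₁.ι.app j = c₂.ι.app j ≫ σp)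
    (hpt : σp ≫ ρp = 𝟙 _) : IsColimit c₂ where
  desc t := σp ≫ h₁.desc ⟨t.pt, ρ ≫ t.ι⟩
  fac t j := by
    rw [← Category.assoc, ← hσ j, Category.assoc, h₁.fac]
    show σ.app j ≫ ρ.app j ≫ t.ι.app j = t.ι.app j
    rw [← Category.assoc, hσρ j, Category.id_comp]
  uniq t m hm := by
    have h : ρp ≫ m = h₁.desc ⟨t.pt, ρ ≫ t.ι⟩ := by
      apply h₁.uniq ⟨t.pt, ρ ≫ t.ι⟩ (ρp ≫ m)
      intro j
      rw [← Category.assoc, ← hρ j, Category.assoc, hm j]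
      rfl
    calc m = (σp ≫ ρp) ≫ m := by rw [hpt, Category.id_comp]
    _ = σp ≫ h₁.desc ⟨t.pt, ρ ≫ t.ι⟩ := by rw [Category.assoc, h]

lemma kappaCompact_of_retract {κ : Cardinal.{u}} {D : Type*} [Category.{u} D] {X F : D}
    (hX : KappaCompact κ X) (s : F ⟶ X) (r : X ⟶ F) (hsr : s ≫ r = 𝟙 F) :
    KappaCompact κ F := by
  intro J _ hJ G e he
  obtain ⟨h₁⟩ := hX J hJ G e he
  constructor
  refine isColimitOfNatRetract h₁ (Functor.whiskerLeft G (coyoneda.map s.op))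
    (Functor.whiskerLeft G (coyoneda.map r.op)) ((coyoneda.map s.op).app e.pt)
    ((coyoneda.map r.op).app e.pt) (fun j => ?_) (fun j => ?_) (fun j => ?_) ?_
  · ext g
    show s ≫ r ≫ g = g
    rw [← Category.assoc, hsr, Category.id_comp]
  · ext g
    show (s ≫ g) ≫ e.ι.app j = s ≫ g ≫ e.ι.app j
    rw [Category.assoc]
  · ext g
    show (r ≫ g) ≫ e.ι.app j = r ≫ g ≫ e.ι.app j
    rw [Category.assoc]
  · ext g
    show s ≫ r ≫ g = g
    rw [← Category.assoc, hsr, Category.id_comp]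

lemma mk_lt_of_isEmpty {T : Type u} [IsEmpty T] {κ : Cardinal.{u}} (hκ : Cardinal.aleph0 ≤ κ) :
    Cardinal.mk T < κ := by
  rw [Cardinal.mk_eq_zero T]
  exact Cardinal.aleph0_pos.trans_le hκ

lemma upper_bound {κ : Cardinal.{u}} (hκ0 : Cardinal.aleph0 ≤ κ) {J : Type u} [SmallCategory J]
    (hJ : KappaFiltered κ J) {A : Type u} (hA : Cardinal.mk A < κ) (l : A → J) :
    ∃ (m : J) (_ : ∀ a, l a ⟶ m), True := by
  obtain ⟨z, _, pY, -⟩ := kappaFiltered_bip hκ0 hJ (fun (_ : PEmpty.{u + 1}) (_ : A) =>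
    PEmpty.{u + 1}) (mk_lt_of_finite hκ0) hA (mk_lt_of_isEmpty hκ0) PEmpty.elim l
    (fun x => x.elim)
  exact ⟨z, pY, trivial⟩

lemma star_bound {κ : Cardinal.{u}} (hκ0 : Cardinal.aleph0 ≤ κ) {J : Type u} [SmallCategory J]
    (hJ : KappaFiltered κ J) {A : Type u} (hA : Cardinal.mk A < κ) (j₀ : J) (l : A → J)
    (w₁ w₂ : ∀ a, j₀ ⟶ l a) :
    ∃ (m : J) (t : j₀ ⟶ m) (p : ∀ a, l a ⟶ m),
      ∀ a, w₁ a ≫ p a = t ∧ w₂ a ≫ p a = t := by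
  have hedge : Cardinal.mk (Σ _ : PUnit.{u + 1}, Σ _ : A, ULift.{u} Bool) < κ := by
    have h1 : Cardinal.mk (Σ _ : PUnit.{u + 1}, Σ _ : A, ULift.{u} Bool)
        ≤ Cardinal.mk (A × ULift.{u} Bool) := by
      refine Cardinal.mk_le_of_injective (f := fun v => (v.2.1, v.2.2)) ?_
      rintro ⟨⟨⟩, a, b⟩ ⟨⟨⟩, a', b'⟩ h
      simp only [Prod.mk.injEq] at h
      obtain ⟨rfl, rfl⟩ := h
      rfl
    refine h1.trans_lt ?_
    rw [Cardinal.mk_prod, Cardinal.lift_id, Cardinal.lift_id]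
    exact Cardinal.mul_lt_of_lt hκ0 hA (mk_lt_of_finite hκ0)
  obtain ⟨z, pX, pY, hp⟩ := kappaFiltered_bip hκ0 hJ
    (fun (_ : PUnit.{u + 1}) (_ : A) => ULift.{u} Bool)
    (mk_lt_of_finite hκ0) hA hedge (fun _ => j₀) l
    (fun _ a b => cond b.down (w₁ a) (w₂ a))
  exact ⟨z, pX ⟨⟩, pY, fun a => ⟨hp ⟨⟩ a ⟨true⟩, hp ⟨⟩ a ⟨false⟩⟩⟩

lemma mk_obj_lt_of_mk_arrow_lt {K : Type u} [Category.{u} K] {κ : Cardinal.{u}}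
    (hK : Cardinal.mk (Arrow K) < κ) : Cardinal.mk K < κ := by
  refine lt_of_le_of_lt (Cardinal.mk_le_of_injective (f := fun k : K => Arrow.mk (𝟙 k)) ?_) hK
  intro a b h
  exact congrArg Comma.left h

lemma kappaCompact_colimit_of_representables {C : Type u} [SmallCategory C] {κ : Cardinal.{u}}
    (hκ : κ.IsRegular) {K : Type u} [SmallCategory K] (hK : Cardinal.mk (Arrow K) < κ)
    (d : K ⥤ C) (c : Cocone (d ⋙ yoneda)) (hc : IsColimit c) : KappaCompact κ c.pt := by
  have hκ0 := hκ.aleph0_le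
  have hKobj : Cardinal.mk K < κ := mk_obj_lt_of_mk_arrow_lt hK
  intro J _ hJ G e he'
  obtain ⟨he⟩ := he'
  haveI : IsFiltered J := isFiltered_of_kappaFiltered hκ0 hJ
  have hev : ∀ (A : Cᵒᵖ), IsColimit (((evaluation Cᵒᵖ (Type u)).obj A).mapCocone e) :=
    fun A => isColimitOfPreserves _ he
  constructor
  apply Types.FilteredColimit.isColimitOf
  · -- surjectivity
    intro f
    let x : ∀ k : K, e.pt.obj (op (d.obj k)) := fun k => yonedaEquiv (c.ι.app k ≫ f)
    have hx : ∀ {k k' : K} (ψ : k ⟶ k'), e.pt.map (d.map ψ).op (x k') = x k := by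
      intro k k' ψ
      show e.pt.map (d.map ψ).op (yonedaEquiv (c.ι.app k' ≫ f)) = _
      rw [yonedaEquiv_naturality]
      show yonedaEquiv ((d ⋙ yoneda).map ψ ≫ c.ι.app k' ≫ f) = yonedaEquiv (c.ι.app k ≫ f)
      rw [← Category.assoc, c.w ψ]
    choose jk y hy using fun k =>
      Types.jointly_surjective (G ⋙ (evaluation Cᵒᵖ (Type u)).obj (op (d.obj k)))
        (hev (op (d.obj k))) (x k)
    obtain ⟨j₀, p0, -⟩ := upper_bound hκ0 hJ hKobj jk
    let z : ∀ k, (G.obj j₀).obj (op (d.obj k)) :=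
      fun k => (G.map (p0 k)).app (op (d.obj k)) (y k)
    have hz : ∀ k, (e.ι.app j₀).app (op (d.obj k)) (z k) = x k := by
      intro k
      have h1 := ConcreteCategory.congr_hom (NatTrans.congr_app (e.w (p0 k)) (op (d.obj k))) (y k)
      exact h1.trans (hy k)
    have key : ∀ (k k' : K) (ψ : k ⟶ k'), ∃ (l : J) (w₁ w₂ : j₀ ⟶ l),
        (G.map w₁).app (op (d.obj k)) (z k)
          = (G.map w₂).app (op (d.obj k))
              ((G.obj j₀).map (d.map ψ).op (z k')) := by
      intro k k' ψ
      have heq : (e.ι.app j₀).app (op (d.obj k)) (z k)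
          = (e.ι.app j₀).app (op (d.obj k))
              ((G.obj j₀).map (d.map ψ).op (z k')) := by
        rw [hz]
        rw [NatTrans.naturality_apply (e.ι.app j₀) (d.map ψ).op (z k')]
        rw [hz]
        exact (hx ψ).symm
      exact (Types.FilteredColimit.isColimit_eq_iff
        (G ⋙ (evaluation Cᵒᵖ (Type u)).obj (op (d.obj k)))
        (hev (op (d.obj k)))).mp heq
    choose l w₁ w₂ hw using fun φ : Arrow K => key φ.left φ.right φ.hom
    obtain ⟨m, t0, pl, hpl⟩ := star_bound hκ0 hJ hK j₀ l w₁ w₂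
    let u : ∀ k, (G.obj m).obj (op (d.obj k)) :=
      fun k => (G.map t0).app (op (d.obj k)) (z k)
    have hu : ∀ {k k' : K} (ψ : k ⟶ k'), (G.obj m).map (d.map ψ).op (u k') = u k := by
      intro k k' ψ
      have h1 : G.map t0 = G.map (w₁ (Arrow.mk ψ)) ≫ G.map (pl (Arrow.mk ψ)) := by
        rw [← G.map_comp, (hpl (Arrow.mk ψ)).1]
      have h2 : G.map t0 = G.map (w₂ (Arrow.mk ψ)) ≫ G.map (pl (Arrow.mk ψ)) := by
        rw [← G.map_comp, (hpl (Arrow.mk ψ)).2]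
      have hwψ : (G.map (w₁ (Arrow.mk ψ))).app (op (d.obj k)) (z k)
          = (G.map (w₂ (Arrow.mk ψ))).app (op (d.obj k))
              ((G.obj j₀).map (d.map ψ).op (z k')) := hw (Arrow.mk ψ)
      calc (G.obj m).map (d.map ψ).op (u k')
          = (G.map t0).app (op (d.obj k)) ((G.obj j₀).map (d.map ψ).op (z k')) :=
            (NatTrans.naturality_apply (G.map t0) (d.map ψ).op (z k')).symm
        _ = (G.map (pl (Arrow.mk ψ))).app (op (d.obj k))
              ((G.map (w₂ (Arrow.mk ψ))).app (op (d.obj k))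
                ((G.obj j₀).map (d.map ψ).op (z k'))) := by rw [h2]; rfl
        _ = (G.map (pl (Arrow.mk ψ))).app (op (d.obj k))
              ((G.map (w₁ (Arrow.mk ψ))).app (op (d.obj k)) (z k)) := by
            rw [← hwψ]
        _ = (G.map t0).app (op (d.obj k)) (z k) := by rw [h1]; rfl
    let s : Cocone (d ⋙ yoneda) :=
      { pt := G.obj m
        ι :=
          { app := fun k => yonedaEquiv.symm (u k)
            naturality := fun k k' ψ => by
              show yoneda.map (d.map ψ) ≫ yonedaEquiv.symm (u k')
                = (yonedaEquiv.symm (u k) : yoneda.obj (d.obj k) ⟶ G.obj m) ≫ 𝟙 (G.obj m)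
              rw [Category.comp_id, yonedaEquiv_symm_naturality_left, hu ψ] } }
    refine ⟨m, hc.desc s, ?_⟩
    have hfinal : hc.desc s ≫ e.ι.app m = f := by
      apply hc.hom_ext
      intro k
      rw [hc.fac_assoc]
      apply yonedaEquiv.injective
      rw [yonedaEquiv_comp]
      show (e.ι.app m).app (op (d.obj k)) (yonedaEquiv (yonedaEquiv.symm (u k))) = _
      rw [Equiv.apply_symm_apply]
      have h3 := ConcreteCategory.congr_hom (NatTrans.congr_app (e.w t0) (op (d.obj k))) (z k)
      exact h3.trans (hz k)
    exact hfinal.symm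
  · -- injectivity
    intro i j fi fj hfij
    have hg : (fi ≫ G.map (IsFiltered.leftToMax i j)) ≫ e.ι.app (IsFiltered.max i j)
        = (fj ≫ G.map (IsFiltered.rightToMax i j)) ≫ e.ι.app (IsFiltered.max i j) := by
      rw [Category.assoc, Category.assoc, e.w, e.w]
      exact hfij
    have key : ∀ k : K, ∃ (l : J) (w₁ w₂ : IsFiltered.max i j ⟶ l),
        (G.map w₁).app (op (d.obj k))
            (yonedaEquiv (c.ι.app k ≫ fi ≫ G.map (IsFiltered.leftToMax i j)))
          = (G.map w₂).app (op (d.obj k))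
              (yonedaEquiv (c.ι.app k ≫ fj ≫ G.map (IsFiltered.rightToMax i j))) := by
      intro k
      have heq : (e.ι.app (IsFiltered.max i j)).app (op (d.obj k))
            (yonedaEquiv (c.ι.app k ≫ fi ≫ G.map (IsFiltered.leftToMax i j)))
          = (e.ι.app (IsFiltered.max i j)).app (op (d.obj k))
              (yonedaEquiv (c.ι.app k ≫ fj ≫ G.map (IsFiltered.rightToMax i j))) := by
        rw [← yonedaEquiv_comp, ← yonedaEquiv_comp]
        congr 1
        simp only [Category.assoc]
        exact congrArg (fun t => c.ι.app k ≫ t)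
          (by rw [← Category.assoc, ← Category.assoc, hg])
      exact (Types.FilteredColimit.isColimit_eq_iff
        (G ⋙ (evaluation Cᵒᵖ (Type u)).obj (op (d.obj k)))
        (hev (op (d.obj k)))).mp heq
    choose l w₁ w₂ hw using key
    obtain ⟨m, t1, pl, hpl⟩ := star_bound hκ0 hJ hKobj (IsFiltered.max i j) l w₁ w₂
    refine ⟨m, IsFiltered.leftToMax i j ≫ t1, IsFiltered.rightToMax i j ≫ t1, ?_⟩
    show fi ≫ G.map (IsFiltered.leftToMax i j ≫ t1)
      = fj ≫ G.map (IsFiltered.rightToMax i j ≫ t1)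
    rw [G.map_comp, G.map_comp, ← Category.assoc, ← Category.assoc]
    apply hc.hom_ext
    intro k
    rw [← Category.assoc, ← Category.assoc]
    apply yonedaEquiv.injective
    rw [yonedaEquiv_comp, yonedaEquiv_comp]
    have h1 : G.map t1 = G.map (w₁ k) ≫ G.map (pl k) := by
      rw [← G.map_comp, (hpl k).1]
    have h2 : G.map t1 = G.map (w₂ k) ≫ G.map (pl k) := by
      rw [← G.map_comp, (hpl k).2]
    calc (G.map t1).app (op (d.obj k))
          (yonedaEquiv (c.ι.app k ≫ fi ≫ G.map (IsFiltered.leftToMax i j)))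
        = (G.map (pl k)).app (op (d.obj k)) ((G.map (w₁ k)).app (op (d.obj k))
            (yonedaEquiv (c.ι.app k ≫ fi ≫ G.map (IsFiltered.leftToMax i j)))) := by
          rw [h1]; rfl
      _ = (G.map (pl k)).app (op (d.obj k)) ((G.map (w₂ k)).app (op (d.obj k))
            (yonedaEquiv (c.ι.app k ≫ fj ≫ G.map (IsFiltered.rightToMax i j)))) := by
          rw [hw k]
      _ = (G.map t1).app (op (d.obj k))
            (yonedaEquiv (c.ι.app k ≫ fj ≫ G.map (IsFiltered.rightToMax i j))) := by
          rw [h2]; rfl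

section Forward

variable {C : Type u} [SmallCategory C]

/-- Morphisms in a preorder category form a subsingleton. -/
instance preorder_hom_subsingleton {P : Type u} [Preorder P] (a b : P) :
    Subsingleton (a ⟶ b) :=
  ⟨fun f g => by
    obtain ⟨⟨_⟩⟩ := f
    obtain ⟨⟨_⟩⟩ := g
    rfl⟩

/-- Cocone over a bipartite diagram composed with yoneda. -/
def bipYonedaCocone {X Y : Type u} (e : X → Y → Type u) (fX : X → C) (fY : Y → C)
    (fe : ∀ x y, e x y → (fX x ⟶ fY y)) (pt : Cᵒᵖ ⥤ Type u)
    (gX : ∀ x, yoneda.obj (fX x) ⟶ pt) (gY : ∀ y, yoneda.obj (fY y) ⟶ pt)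
    (hcomm : ∀ x y (h : e x y), yoneda.map (fe x y h) ≫ gY y = gX x) :
    Cocone (bipFunctor e fX fY fe ⋙ yoneda) :=
  pathsCocone (bipFunctor e fX fY fe ⋙ yoneda) pt
    (fun v => match v with
      | ⟨Sum.inl x⟩ => gX x
      | ⟨Sum.inr y⟩ => gY y)
    (by
      intro a b q
      match a, b, q with
      | ⟨Sum.inl x⟩, ⟨Sum.inr y⟩, q =>
        show (bipFunctor e fX fY fe ⋙ yoneda).map (bipHom q) ≫ gY y = gX x
        rw [Functor.comp_map, bipFunctor_map_edge]
        exact hcomm x y q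
      | ⟨Sum.inl x⟩, ⟨Sum.inl x'⟩, q => exact q.elim
      | ⟨Sum.inr y⟩, ⟨Sum.inl x'⟩, q => exact q.elim
      | ⟨Sum.inr y⟩, ⟨Sum.inr y'⟩, q => exact q.elim)

lemma bip_colimit_w {X Y : Type u} (e : X → Y → Type u) (fX : X → C) (fY : Y → C)
    (fe : ∀ x y, e x y → (fX x ⟶ fY y)) {x : X} {y : Y} (h : e x y) :
    yoneda.map (fe x y h) ≫ colimit.ι (bipFunctor e fX fY fe ⋙ yoneda) (bipIn ⟨Sum.inr y⟩)
      = colimit.ι (bipFunctor e fX fY fe ⋙ yoneda) (bipIn ⟨Sum.inl x⟩) := by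
  have h1 := colimit.w (bipFunctor e fX fY fe ⋙ yoneda) (bipHom h)
  rw [Functor.comp_map, bipFunctor_map_edge] at h1
  exact h1

variable (F : Cᵒᵖ ⥤ Type u)

/-- endpoints of a set of arrows -/
def endpts (T : Set (Arrow (CostructuredArrow yoneda F))) : Set (CostructuredArrow yoneda F) :=
  {x | ∃ a ∈ T, a.left = x ∨ a.right = x}

lemma endpts_mono {T T' : Set (Arrow (CostructuredArrow yoneda F))} (h : T ⊆ T') :
    endpts F T ⊆ endpts F T' := by
  rintro x ⟨a, ha, hx⟩
  exact ⟨a, h ha, hx⟩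

lemma mk_endpts_lt {κ : Cardinal.{u}} (hκ0 : Cardinal.aleph0 ≤ κ)
    {T : Set (Arrow (CostructuredArrow yoneda F))} (hT : Cardinal.mk T < κ) :
    Cardinal.mk (endpts F T) < κ := by
  have hsurj : Function.Surjective (fun v : ↥T ⊕ ↥T => match v with
      | Sum.inl a => (⟨a.1.left, a, a.2, Or.inl rfl⟩ : endpts F T)
      | Sum.inr a => (⟨a.1.right, a, a.2, Or.inr rfl⟩ : endpts F T)) := by
    rintro ⟨x, a, ha, hx | hx⟩
    · exact ⟨Sum.inl ⟨a, ha⟩, Subtype.ext hx⟩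
    · exact ⟨Sum.inr ⟨a, ha⟩, Subtype.ext hx⟩
  refine (Cardinal.mk_le_of_surjective hsurj).trans_lt ?_
  simp only [Cardinal.mk_sum, Cardinal.lift_id]
  exact Cardinal.add_lt_of_lt hκ0 hT hT

/-- the edges of the bipartite quiver associated to a set of arrows -/
def eT (T : Set (Arrow (CostructuredArrow yoneda F))) :
    ↥T → ↥(endpts F T) → Type u :=
  fun a o => ULift.{u} (PLift (a.1.left = o.1)) ⊕ ULift.{u} (PLift (a.1.right = o.1))

lemma mk_eT_lt {κ : Cardinal.{u}} (hκ0 : Cardinal.aleph0 ≤ κ)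
    {T : Set (Arrow (CostructuredArrow yoneda F))} (hT : Cardinal.mk T < κ) :
    Cardinal.mk (Σ a, Σ o, eT F T a o) < κ := by
  have hsurj : Function.Surjective (fun v : ↥T ⊕ ↥T => match v with
      | Sum.inl a => (⟨a, ⟨a.1.left, a, a.2, Or.inl rfl⟩, Sum.inl ⟨⟨rfl⟩⟩⟩ :
          Σ a, Σ o, eT F T a o)
      | Sum.inr a => (⟨a, ⟨a.1.right, a, a.2, Or.inr rfl⟩, Sum.inr ⟨⟨rfl⟩⟩⟩ :
          Σ a, Σ o, eT F T a o)) := by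
    rintro ⟨a, ⟨ov, hov⟩, (⟨⟨⟨h⟩⟩⟩ | ⟨⟨⟨h⟩⟩⟩)⟩
    · refine ⟨Sum.inl a, ?_⟩
      have h' : (a.1).left = ov := h
      subst h'
      rfl
    · refine ⟨Sum.inr a, ?_⟩
      have h' : (a.1).right = ov := h
      subst h'
      rfl
  refine (Cardinal.mk_le_of_surjective hsurj).trans_lt ?_
  simp only [Cardinal.mk_sum, Cardinal.lift_id]
  exact Cardinal.add_lt_of_lt hκ0 hT hT

/-- the source functor on the bipartite quiver of a set of arrows -/
def feT (T : Set (Arrow (CostructuredArrow yoneda F))) :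
    ∀ (a : ↥T) (o : ↥(endpts F T)), eT F T a o →
      ((a.1.left).left ⟶ (o.1).left) := fun a o h =>
  match h with
  | Sum.inl h => eqToHom (congrArg Comma.left h.down.down)
  | Sum.inr h => a.1.hom.left ≫ eqToHom (congrArg Comma.left h.down.down)

/-- the diagram in `C` associated to a set of arrows -/
def dT (T : Set (Arrow (CostructuredArrow yoneda F))) : BipCat (eT F T) ⥤ C :=
  bipFunctor (eT F T) (fun a => (a.1.left).left) (fun o => (o.1).left) (feT F T)

/-- the corresponding diagram of representables -/
abbrev GT (T : Set (Arrow (CostructuredArrow yoneda F))) :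
    BipCat (eT F T) ⥤ (Cᵒᵖ ⥤ Type u) := dT F T ⋙ yoneda

lemma gt_hom_ext {T : Set (Arrow (CostructuredArrow yoneda F))} {W : Cᵒᵖ ⥤ Type u}
    {f g : colimit (GT F T) ⟶ W}
    (h : ∀ v : BipV (eT F T), colimit.ι (GT F T) (bipIn v) ≫ f
      = colimit.ι (GT F T) (bipIn v) ≫ g) : f = g :=
  colimit.hom_ext (fun v => h v)

lemma gt_w (T : Set (Arrow (CostructuredArrow yoneda F))) {a : ↥T} {o : ↥(endpts F T)}
    (h : eT F T a o) :
    yoneda.map (feT F T a o h) ≫ colimit.ι (GT F T) (bipIn ⟨Sum.inr o⟩)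
      = colimit.ι (GT F T) (bipIn ⟨Sum.inl a⟩) :=
  bip_colimit_w _ _ _ _ h

lemma rT_comm (T : Set (Arrow (CostructuredArrow yoneda F))) :
    ∀ (a : ↥T) (o : ↥(endpts F T)) (h : eT F T a o),
      yoneda.map (feT F T a o h) ≫ (o.1).hom = (a.1.left).hom := by
  rintro a ⟨ov, ho⟩ (⟨⟨⟨h⟩⟩⟩ | ⟨⟨⟨h⟩⟩⟩)
  · have h' : (a.1).left = ov := h
    subst h'
    simp [feT]
  · have h' : (a.1).right = ov := h
    subst h'
    simp [feT, CostructuredArrow.w]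

/-- the canonical map from the colimit to `F` -/
noncomputable def rT (T : Set (Arrow (CostructuredArrow yoneda F))) :
    colimit (GT F T) ⟶ F :=
  colimit.desc (GT F T) (bipYonedaCocone _ _ _ _ F
    (fun a => (a.1.left).hom) (fun o => (o.1).hom) (rT_comm F T))

@[simp] lemma rT_fac_inr (T : Set (Arrow (CostructuredArrow yoneda F)))
    (o : ↥(endpts F T)) :
    colimit.ι (GT F T) (bipIn ⟨Sum.inr o⟩) ≫ rT F T = (o.1).hom :=
  colimit.ι_desc _ _

@[simp] lemma rT_fac_inl (T : Set (Arrow (CostructuredArrow yoneda F))) (a : ↥T) :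
    colimit.ι (GT F T) (bipIn ⟨Sum.inl a⟩) ≫ rT F T = (a.1.left).hom :=
  colimit.ι_desc _ _

/-- transport of edges along inclusion -/
def eT_incl {T T' : Set (Arrow (CostructuredArrow yoneda F))} (hsub : T ⊆ T') {a : ↥T}
    {o : ↥(endpts F T)} (h : eT F T a o) :
    eT F T' ⟨a.1, hsub a.2⟩ ⟨o.1, endpts_mono F hsub o.2⟩ :=
  match h with
  | Sum.inl h => Sum.inl ⟨⟨h.down.down⟩⟩
  | Sum.inr h => Sum.inr ⟨⟨h.down.down⟩⟩

lemma feT_incl {T T' : Set (Arrow (CostructuredArrow yoneda F))} (hsub : T ⊆ T') (a : ↥T)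
    (o : ↥(endpts F T)) (h : eT F T a o) :
    feT F T' ⟨a.1, hsub a.2⟩ ⟨o.1, endpts_mono F hsub o.2⟩ (eT_incl F hsub h)
      = feT F T a o h := by
  rcases h with ⟨⟨h⟩⟩ | ⟨⟨h⟩⟩ <;> rfl

/-- The inclusion-induced map between colimits. -/
noncomputable def inclMap {T T' : Set (Arrow (CostructuredArrow yoneda F))} (hsub : T ⊆ T') :
    colimit (GT F T) ⟶ colimit (GT F T') :=
  colimit.desc (GT F T) (bipYonedaCocone _ _ _ _ (colimit (GT F T'))
    (fun a => colimit.ι (GT F T') (bipIn ⟨Sum.inl ⟨a.1, hsub a.2⟩⟩))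
    (fun o => colimit.ι (GT F T') (bipIn ⟨Sum.inr ⟨o.1, endpts_mono F hsub o.2⟩⟩))
    (fun a o h => by
      have h1 := gt_w F T' (eT_incl F hsub h)
      rw [feT_incl] at h1
      exact h1))

@[simp] lemma inclMap_ι_inl {T T' : Set (Arrow (CostructuredArrow yoneda F))} (hsub : T ⊆ T')
    (a : ↥T) : colimit.ι (GT F T) (bipIn ⟨Sum.inl a⟩) ≫ inclMap F hsub
      = colimit.ι (GT F T') (bipIn ⟨Sum.inl ⟨a.1, hsub a.2⟩⟩) :=
  colimit.ι_desc _ _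

@[simp] lemma inclMap_ι_inr {T T' : Set (Arrow (CostructuredArrow yoneda F))} (hsub : T ⊆ T')
    (o : ↥(endpts F T)) : colimit.ι (GT F T) (bipIn ⟨Sum.inr o⟩) ≫ inclMap F hsub
      = colimit.ι (GT F T') (bipIn ⟨Sum.inr ⟨o.1, endpts_mono F hsub o.2⟩⟩) :=
  colimit.ι_desc _ _

lemma inclMap_rT {T T' : Set (Arrow (CostructuredArrow yoneda F))} (hsub : T ⊆ T') :
    inclMap F hsub ≫ rT F T' = rT F T := by
  refine gt_hom_ext F (fun v => ?_)
  rcases v with ⟨va | vo⟩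
  · rw [← Category.assoc, inclMap_ι_inl, rT_fac_inl]; exact rT_fac_inl F T' _
  · rw [← Category.assoc, inclMap_ι_inr, rT_fac_inr]; exact rT_fac_inr F T' _

variable (κ : Cardinal.{u})

/-- The poset of `κ`-small sets of arrows. -/
abbrev Sub : Type u := {T : Set (Arrow (CostructuredArrow yoneda F)) // Cardinal.mk ↥T < κ}

instance : Preorder (Sub F κ) := by
  unfold Sub
  infer_instance

/-- The filtered diagram of `κ`-small colimits of representables. -/
noncomputable def Phi : Sub F κ ⥤ (Cᵒᵖ ⥤ Type u) where
  obj T := colimit (GT F T.1)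
  map {T T'} f := inclMap F (leOfHom f)
  map_id T := by
    refine gt_hom_ext F (fun v => ?_)
    rcases v with ⟨va | vo⟩
    · rw [inclMap_ι_inl, Category.comp_id]
    · rw [inclMap_ι_inr, Category.comp_id]
  map_comp {T T' T''} f g := by
    refine gt_hom_ext F (fun v => ?_)
    rcases v with ⟨va | vo⟩
    · rw [inclMap_ι_inl, ← Category.assoc, inclMap_ι_inl]; exact (inclMap_ι_inl F (T := T'.1) (T' := T''.1) (leOfHom g) ⟨va.1, leOfHom f va.2⟩).symm
    · rw [inclMap_ι_inr, ← Category.assoc, inclMap_ι_inr]; exact (inclMap_ι_inr F (T := T'.1) (T' := T''.1) _ ⟨vo.1, _⟩).symm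

/-- The cocone on `Phi` with point `F`. -/
noncomputable def PhiCocone : Cocone (Phi F κ) where
  pt := F
  ι :=
    { app := fun T => rT F T.1
      naturality := fun T T' f => by
        show inclMap F (leOfHom f) ≫ rT F T'.1 = rT F T.1 ≫ 𝟙 F
        rw [inclMap_rT, Category.comp_id] }

lemma comp_eq (t : Cocone (Phi F κ)) {T T' : Sub F κ} (h : T.1 ⊆ T'.1)
    (o : ↥(endpts F T.1)) :
    colimit.ι (GT F T.1) (bipIn ⟨Sum.inr o⟩) ≫ t.ι.app T
      = colimit.ι (GT F T'.1) (bipIn ⟨Sum.inr ⟨o.1, endpts_mono F h o.2⟩⟩) ≫ t.ι.app T' := by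
  erw [← t.w (homOfLE h : T ⟶ T'), ← Category.assoc]
  congr 1
  exact inclMap_ι_inr F (leOfHom (homOfLE h)) o

lemma ι_inl_eq (T : Set (Arrow (CostructuredArrow yoneda F))) (a : ↥T) :
    colimit.ι (GT F T) (bipIn ⟨Sum.inl a⟩)
      = colimit.ι (GT F T) (bipIn ⟨Sum.inr ⟨a.1.left, ⟨a.1, a.2, Or.inl rfl⟩⟩⟩) := by
  have h1 := gt_w F T (Sum.inl ⟨⟨rfl⟩⟩ : eT F T a ⟨a.1.left, ⟨a.1, a.2, Or.inl rfl⟩⟩)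
  simp [feT] at h1
  exact h1.symm

lemma ι_rel (T : Set (Arrow (CostructuredArrow yoneda F)))
    {X X' : CostructuredArrow yoneda F} (μ : X ⟶ X') (hμ : Arrow.mk μ ∈ T) :
    yoneda.map μ.left
        ≫ colimit.ι (GT F T) (bipIn ⟨Sum.inr ⟨X', ⟨Arrow.mk μ, hμ, Or.inr rfl⟩⟩⟩)
      = colimit.ι (GT F T) (bipIn ⟨Sum.inr ⟨X, ⟨Arrow.mk μ, hμ, Or.inl rfl⟩⟩⟩) := by
  have hL := gt_w F T
    (Sum.inl ⟨⟨rfl⟩⟩ : eT F T ⟨Arrow.mk μ, hμ⟩ ⟨X, ⟨Arrow.mk μ, hμ, Or.inl rfl⟩⟩)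
  have hR := gt_w F T
    (Sum.inr ⟨⟨rfl⟩⟩ : eT F T ⟨Arrow.mk μ, hμ⟩ ⟨X', ⟨Arrow.mk μ, hμ, Or.inr rfl⟩⟩)
  simp [feT] at hL hR
  rw [hR]
  exact hL.symm

variable {κ} (hκ0 : Cardinal.aleph0 ≤ κ)

/-- the singleton object of the poset -/
def singSub (X : CostructuredArrow yoneda F) : Sub F κ :=
  ⟨{Arrow.mk (𝟙 X)}, by
    haveI := (Set.finite_singleton (Arrow.mk (𝟙 X))).to_subtype
    exact mk_lt_of_finite hκ0⟩

lemma mem_endpts_sing (X : CostructuredArrow yoneda F) :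
    X ∈ endpts F (singSub F hκ0 X).1 :=
  ⟨Arrow.mk (𝟙 X), rfl, Or.inl rfl⟩

/-- components of the cocone used for `desc` -/
noncomputable def compApp (t : Cocone (Phi F κ)) (X : CostructuredArrow yoneda F) :
    yoneda.obj X.left ⟶ t.pt :=
  colimit.ι (GT F (singSub F hκ0 X).1) (bipIn ⟨Sum.inr ⟨X, mem_endpts_sing F hκ0 X⟩⟩)
    ≫ t.ι.app (singSub F hκ0 X)

lemma compApp_eq (t : Cocone (Phi F κ)) (X : CostructuredArrow yoneda F) {T : Sub F κ}
    (h : (singSub F hκ0 X).1 ⊆ T.1) (hmem : X ∈ endpts F T.1) :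
    compApp F hκ0 t X = colimit.ι (GT F T.1) (bipIn ⟨Sum.inr ⟨X, hmem⟩⟩) ≫ t.ι.app T := by
  erw [compApp, comp_eq F κ t h]

/-- the cocone over the tautological diagram used for `desc` -/
noncomputable def descCocone (t : Cocone (Phi F κ)) :
    Cocone (CostructuredArrow.proj yoneda F ⋙ yoneda) where
  pt := t.pt
  ι :=
    { app := fun X => compApp F hκ0 t X
      naturality := fun X X' μ => by
        have hfin : (insert (Arrow.mk (𝟙 X)) (insert (Arrow.mk (𝟙 X'))
            {Arrow.mk μ}) : Set (Arrow (CostructuredArrow yoneda F))).Finite :=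
          (Set.finite_singleton _).insert _ |>.insert _
        haveI := hfin.to_subtype
        set Tμ : Sub F κ := ⟨insert (Arrow.mk (𝟙 X)) (insert (Arrow.mk (𝟙 X')) {Arrow.mk μ}),
          mk_lt_of_finite hκ0⟩ with hTμ
        have hmem : Arrow.mk μ ∈ Tμ.1 := by simp [hTμ]
        have h1 : (singSub F hκ0 X).1 ⊆ Tμ.1 := by
          intro v hv
          rw [hv]
          simp [hTμ]
        have h2 : (singSub F hκ0 X').1 ⊆ Tμ.1 := by
          intro v hv
          rw [hv]
          simp [hTμ]
        show (CostructuredArrow.proj yoneda F ⋙ yoneda).map μ ≫ compApp F hκ0 t X'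
          = compApp F hκ0 t X ≫ 𝟙 t.pt
        rw [Category.comp_id]
        rw [compApp_eq F hκ0 t X h1 ⟨Arrow.mk μ, hmem, Or.inl rfl⟩,
          compApp_eq F hκ0 t X' h2 ⟨Arrow.mk μ, hmem, Or.inr rfl⟩]
        show yoneda.map μ.left ≫ _ = _
        erw [← Category.assoc, ι_rel F Tμ.1 μ hmem]; rfl }

/-- `F` is the `κ`-filtered colimit of the `κ`-small colimits of representables. -/
noncomputable def PhiIsColimit : IsColimit (PhiCocone F κ) where
  desc t := (Presheaf.isColimitTautologicalCocone F).desc (descCocone F hκ0 t)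
  fac t T := by
    show rT F T.1 ≫ (Presheaf.isColimitTautologicalCocone F).desc (descCocone F hκ0 t)
      = t.ι.app T
    have key : ∀ o : ↥(endpts F T.1),
        colimit.ι (GT F T.1) (bipIn ⟨Sum.inr o⟩)
            ≫ rT F T.1 ≫ (Presheaf.isColimitTautologicalCocone F).desc (descCocone F hκ0 t)
          = colimit.ι (GT F T.1) (bipIn ⟨Sum.inr o⟩) ≫ t.ι.app T := by
      intro o
      erw [← Category.assoc, rT_fac_inr]
      have htaut : (o.1).hom = (Presheaf.tautologicalCocone F).ι.app o.1 := rfl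
      erw [htaut, (Presheaf.isColimitTautologicalCocone F).fac (descCocone F hκ0 t) o.1]
      show compApp F hκ0 t o.1 = _
      have hsmall : Cardinal.mk ↥(T.1 ∪ (singSub F hκ0 o.1).1) < κ := by
        refine (Cardinal.mk_union_le _ _).trans_lt ?_
        exact Cardinal.add_lt_of_lt hκ0 T.2 (singSub F hκ0 o.1).2
      set T' : Sub F κ := ⟨T.1 ∪ (singSub F hκ0 o.1).1, hsmall⟩ with hT'
      have hsub1 : (singSub F hκ0 o.1).1 ⊆ T'.1 := Set.subset_union_right
      have hsub2 : T.1 ⊆ T'.1 := Set.subset_union_left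
      rw [compApp_eq F hκ0 t o.1 hsub1 (endpts_mono F hsub2 o.2)]
      rw [comp_eq F κ t hsub2 o]
    refine gt_hom_ext F (fun v => ?_)
    rcases v with ⟨va | vo⟩
    · rw [ι_inl_eq]
      exact key _
    · exact key vo
  uniq t m hm := by
    refine (Presheaf.isColimitTautologicalCocone F).hom_ext (fun X => ?_)
    have h1 : (Presheaf.tautologicalCocone F).ι.app X
        = colimit.ι (GT F (singSub F hκ0 X).1)
            (bipIn ⟨Sum.inr ⟨X, mem_endpts_sing F hκ0 X⟩⟩) ≫ rT F (singSub F hκ0 X).1 := by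
      rw [Presheaf.tautologicalCocone_ι_app]
      exact (rT_fac_inr F (singSub F hκ0 X).1 ⟨X, mem_endpts_sing F hκ0 X⟩).symm
    have hm' : rT F (singSub F hκ0 X).1 ≫ m = t.ι.app (singSub F hκ0 X) :=
      hm (singSub F hκ0 X)
    have hR := (Presheaf.isColimitTautologicalCocone F).fac (descCocone F hκ0 t) X
    show (Presheaf.tautologicalCocone F).ι.app X ≫ m
      = (Presheaf.tautologicalCocone F).ι.app X
        ≫ (Presheaf.isColimitTautologicalCocone F).desc (descCocone F hκ0 t)
    calc ((Presheaf.tautologicalCocone F).ι.app X ≫ m : (CostructuredArrow.proj yoneda F ⋙ yoneda).obj X ⟶ t.pt)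
        = (colimit.ι (GT F (singSub F hκ0 X).1)
            (bipIn ⟨Sum.inr ⟨X, mem_endpts_sing F hκ0 X⟩⟩)
            ≫ rT F (singSub F hκ0 X).1 ≫ m : (CostructuredArrow.proj yoneda F ⋙ yoneda).obj X ⟶ t.pt) := by erw [h1, Category.assoc]
      _ = (colimit.ι (GT F (singSub F hκ0 X).1)
            (bipIn ⟨Sum.inr ⟨X, mem_endpts_sing F hκ0 X⟩⟩)
            ≫ t.ι.app (singSub F hκ0 X) : (CostructuredArrow.proj yoneda F ⋙ yoneda).obj X ⟶ t.pt) := by rw [hm']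
      _ = ((Presheaf.tautologicalCocone F).ι.app X
            ≫ (Presheaf.isColimitTautologicalCocone F).desc (descCocone F hκ0 t) : (CostructuredArrow.proj yoneda F ⋙ yoneda).obj X ⟶ t.pt) := by
          exact hR.symm

lemma sub_kappaFiltered (hκ : κ.IsRegular) : KappaFiltered κ (Sub F κ) := by
  intro A _ hA Ψ
  have hAobj : Cardinal.mk A < κ := mk_obj_lt_of_mk_arrow_lt hA
  have hU : Cardinal.mk ↥(⋃ a : A, (Ψ.obj a).1) < κ := by
    refine (Cardinal.mk_iUnion_le _).trans_lt ?_
    exact Cardinal.mul_lt_of_lt hκ.aleph0_le hAobj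
      (Cardinal.iSup_lt_of_isRegular hκ hAobj (fun a => (Ψ.obj a).2))
  refine ⟨{ pt := ⟨⋃ a : A, (Ψ.obj a).1, hU⟩, ι := ?_ }⟩
  exact
    { app := fun a => homOfLE (Set.subset_iUnion (fun a : A => (Ψ.obj a).1) a)
      naturality := fun _ _ _ => Subsingleton.elim _ _ }

end Forward

end Stmt12Aux

/-- For a small category `C` and a regular cardinal `κ`, a presheaf
`F ∈ P(C)` is `κ`-compact if and only if it is a retract of a `κ`-small colimit of
representable presheaves. -/
theorem stmt12 {C : Type u} [SmallCategory C] (κ : Cardinal.{u}) (hκ : κ.IsRegular)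
    (F : Cᵒᵖ ⥤ Type u) :
    KappaCompact κ F ↔
      ∃ K : Cat.{u, u}, Cardinal.mk (Arrow K) < κ ∧
        ∃ (d : K ⥤ C) (c : Cocone (d ⋙ yoneda)) (_ : Nonempty (IsColimit c))
          (s : F ⟶ c.pt) (r : c.pt ⟶ F), s ≫ r = 𝟙 F := by
  constructor
  · intro hF
    obtain ⟨hc⟩ := hF (Stmt12Aux.Sub F κ) (Stmt12Aux.sub_kappaFiltered F hκ)
      (Stmt12Aux.Phi F κ) (Stmt12Aux.PhiCocone F κ)
      ⟨Stmt12Aux.PhiIsColimit F hκ.aleph0_le⟩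
    obtain ⟨T, s, hs⟩ := Types.jointly_surjective _ hc (𝟙 F)
    refine ⟨Cat.of (Stmt12Aux.BipCat (Stmt12Aux.eT F T.1)), ?_, Stmt12Aux.dT F T.1,
      colimit.cocone (Stmt12Aux.GT F T.1), ⟨colimit.isColimit _⟩, s, Stmt12Aux.rT F T.1, hs⟩
    exact Stmt12Aux.bip_arrow_card hκ.aleph0_le T.2
      (Stmt12Aux.mk_endpts_lt F hκ.aleph0_le T.2) (Stmt12Aux.mk_eT_lt F hκ.aleph0_le T.2)
  · rintro ⟨K, hK, d, c, ⟨hc⟩, s, r, hsr⟩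
    exact Stmt12Aux.kappaCompact_of_retract
      (Stmt12Aux.kappaCompact_colimit_of_representables hκ hK d c hc) s r hsr
end

section
/- Let C be a small idempotent-complete category admitting κ-small colimits, for κ a regular cardinal. Then the Yoneda embedding j : C → P(C)^κ into the κ-compact objects of the presheaf category admits a left adjoint. -/
open CategoryTheory Limits Opposite

universe u

namespace Stmt13

variable {C : Type u} [SmallCategory C]

/-- `F` admits a reflection into `C` along the Yoneda embedding. -/
def Reflects (F : Cᵒᵖ ⥤ Type u) : Prop :=
  ∃ (c : C) (η : F ⟶ yoneda.obj c), ∀ (c' : C) (f : F ⟶ yoneda.obj c'),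
    ∃! g : c ⟶ c', η ≫ yoneda.map g = f

theorem reflects_colimit {A : Type u} [SmallCategory A] [HasColimitsOfShape A C]
    (D : A ⥤ C) : Reflects (colimit (D ⋙ yoneda)) := by
  refine ⟨colimit D, colimit.desc _ (yoneda.mapCocone (colimit.cocone D)), ?_⟩
  intro c' f
  let K : Cocone D :=
    { pt := c'
      ι :=
        { app := fun a => yoneda.preimage (colimit.ι (D ⋙ yoneda) a ≫ f)
          naturality := fun a b m => by
            apply yoneda.map_injective
            simp [← colimit.w (D ⋙ yoneda) m] } }
  refine ⟨colimit.desc D K, ?_, ?_⟩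
  · apply colimit.hom_ext
    intro a
    rw [colimit.ι_desc_assoc]
    dsimp
    rw [← yoneda.map_comp, colimit.ι_desc]
    simp [K]
  · intro g' hg'
    apply colimit.hom_ext
    intro a
    apply yoneda.map_injective
    rw [yoneda.map_comp, yoneda.map_comp]
    have h1 : yoneda.map (colimit.ι D a) ≫ yoneda.map g' =
        colimit.ι (D ⋙ yoneda) a ≫ f := by
      rw [← hg', ← Category.assoc]
      congr 1
      simp
    have h2 : yoneda.map (colimit.ι D a) ≫ yoneda.map (colimit.desc D K) =
        colimit.ι (D ⋙ yoneda) a ≫ f := by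
      rw [← yoneda.map_comp, colimit.ι_desc]
      simp [K]
    rw [h1, h2]

theorem reflects_retract [IsIdempotentComplete C] {F G : Cᵒᵖ ⥤ Type u}
    (s : F ⟶ G) (r : G ⟶ F) (hsr : s ≫ r = 𝟙 F) (hG : Reflects G) : Reflects F := by
  obtain ⟨d, ηG, hη⟩ := hG
  have hsr' : ∀ {X : Cᵒᵖ ⥤ Type u} (g : F ⟶ X), s ≫ r ≫ g = g := fun g => by
    rw [← Category.assoc, hsr, Category.id_comp]
  obtain ⟨e, he, heuniq⟩ := hη d (r ≫ s ≫ ηG)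
  have hee : e ≫ e = e := by
    have h2 : ηG ≫ yoneda.map (e ≫ e) = r ≫ s ≫ ηG := by
      rw [yoneda.map_comp, ← Category.assoc, he]
      simp only [Category.assoc]
      rw [he, hsr']
    exact (heuniq _ h2).trans (heuniq e he).symm
  obtain ⟨c, i, q, hiq, hqi⟩ := IsIdempotentComplete.idempotents_split d e hee
  have h3 : e ≫ q = q := by rw [← hqi, Category.assoc, hiq, Category.comp_id]
  refine ⟨c, s ≫ ηG ≫ yoneda.map q, ?_⟩
  intro c' f
  obtain ⟨h, hh, hhuniq⟩ := hη c' (r ≫ f)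
  have key : ∀ g' : c ⟶ c', (s ≫ ηG ≫ yoneda.map q) ≫ yoneda.map g' = f → q ≫ g' = h := by
    intro g' hg'
    apply hhuniq
    rw [← hg']
    simp only [Category.assoc]
    rw [← reassoc_of% he, ← Functor.map_comp_assoc, h3, ← yoneda.map_comp]
  refine ⟨i ≫ h, ?_, ?_⟩
  · show (s ≫ ηG ≫ yoneda.map q) ≫ yoneda.map (i ≫ h) = f
    rw [yoneda.map_comp]
    simp only [Category.assoc]
    rw [← Functor.map_comp_assoc, hqi, reassoc_of% he, hsr', hh, hsr']
  · intro g' hg'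
    rw [← key g' hg', ← Category.assoc, hiq, Category.id_comp]


section StepC

variable (F : Cᵒᵖ ⥤ Type u) (κ : Cardinal.{u})

/-- Elements of the presheaf `F`. -/
abbrev Elt : Type u := Σ c : C, F.obj (op c)

/-- Relations between elements of `F`. -/
structure Rel : Type u where
  x : Elt F
  y : Elt F
  f : y.1 ⟶ x.1
  hf : F.map f.op x.2 = y.2

/-- A pair of sets of elements and relations is good if both are `κ`-small and the
relations have endpoints among the chosen elements. -/
def Good (S : Set (Elt F) × Set (Rel F)) : Prop :=
  Cardinal.mk S.1 < κ ∧ Cardinal.mk S.2 < κ ∧ ∀ r ∈ S.2, r.x ∈ S.1 ∧ r.y ∈ S.1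

/-- Index poset of `κ`-small presentations. -/
abbrev Idx : Type u := { S : Set (Elt F) × Set (Rel F) // Good F κ S }

instance : Preorder (Idx F κ) := Subtype.preorder _

/-- The multispan index associated to an index. -/
abbrev mshape (j : Idx F κ) : MultispanShape where
  L := j.1.2
  R := j.1.1
  fst r := ⟨r.1.x, (j.2.2.2 r.1 r.2).1⟩
  snd r := ⟨r.1.y, (j.2.2.2 r.1 r.2).2⟩

/-- The multispan index associated to an index. -/
def mindex (j : Idx F κ) : MultispanIndex (mshape F κ j) C where
  left r := r.1.y.1
  right i := i.1.1
  fst r := r.1.f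
  snd _ := 𝟙 _

/-- The diagram of representables associated to an index. -/
def Dy (j : Idx F κ) :
    WalkingMultispan (mshape F κ j) ⥤ (Cᵒᵖ ⥤ Type u) :=
  (mindex F κ j).multispan ⋙ yoneda

/-- Its colimit. -/
noncomputable abbrev Gobj (j : Idx F κ) : Cᵒᵖ ⥤ Type u := colimit (Dy F κ j)

/-- The canonical cocone on the diagram of representables, with apex `F`. -/
noncomputable def coconeF (j : Idx F κ) : Cocone (Dy F κ j) where
  pt := F
  ι :=
    { app := fun a => match a with
        | .left r => yonedaEquiv.symm r.1.y.2
        | .right i => yonedaEquiv.symm i.1.2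
      naturality := fun X Y m => by
        cases m using WalkingMultispan.Hom.casesOn with
        | id => simp
        | fst r =>
            show yoneda.map r.1.f ≫ yonedaEquiv.symm r.1.x.2 = yonedaEquiv.symm r.1.y.2 ≫ 𝟙 F
            rw [yonedaEquiv_symm_naturality_left, r.1.hf, Category.comp_id]
        | snd r =>
            show yoneda.map (𝟙 _) ≫ yonedaEquiv.symm r.1.y.2 = yonedaEquiv.symm r.1.y.2 ≫ 𝟙 F
            simp }

/-- The canonical map to `F`. -/
noncomputable def theta (j : Idx F κ) : Gobj F κ j ⟶ F := colimit.desc _ (coconeF F κ j)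

/-- Transition maps. -/
noncomputable def Gmap {j j' : Idx F κ} (h : j ≤ j') : Gobj F κ j ⟶ Gobj F κ j' :=
  colimit.desc (Dy F κ j)
    { pt := Gobj F κ j'
      ι :=
        { app := fun a => match a with
            | .left r => colimit.ι (Dy F κ j') (.left ⟨r.1, h.2 r.2⟩)
            | .right i => colimit.ι (Dy F κ j') (.right ⟨i.1, h.1 i.2⟩)
          naturality := fun X Y m => by
            cases m using WalkingMultispan.Hom.casesOn with
            | id => simp
            | fst r =>
                exact (colimit.w (Dy F κ j') (WalkingMultispan.Hom.fst (J := mshape F κ j') ⟨r.1, h.2 r.2⟩)).trans (Category.comp_id _).symm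
            | snd r =>
                exact (colimit.w (Dy F κ j') (WalkingMultispan.Hom.snd (J := mshape F κ j') ⟨r.1, h.2 r.2⟩)).trans (Category.comp_id _).symm } }

/-- The filtered system of `κ`-small approximations of `F`. -/
noncomputable def Gfun : Idx F κ ⥤ (Cᵒᵖ ⥤ Type u) where
  obj := Gobj F κ
  map h := Gmap F κ (leOfHom h)
  map_id j := colimit.hom_ext (fun a => by
    cases a with
    | left r => simp [Gmap]
    | right i => simp [Gmap])
  map_comp f g := colimit.hom_ext (fun a => by
    cases a with
    | left r => simp [Gmap]; symm; exact colimit.ι_desc _ _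
    | right i => simp [Gmap]; symm; exact colimit.ι_desc _ _)

/-- The cocone with apex `F` over the filtered system. -/
noncomputable def cocF : Cocone (Gfun F κ) where
  pt := F
  ι :=
    { app := theta F κ
      naturality := fun j j' h => colimit.hom_ext (fun a => by
        cases a with
        | left r => simp [Gfun, Gmap, theta, coconeF]; exact colimit.ι_desc _ _
        | right i => simp [Gfun, Gmap, theta, coconeF]; exact colimit.ι_desc _ _) }

/-- Canonical elements of `Gobj`. -/
noncomputable def iota (j : Idx F κ) (i : j.1.1) {c : C} (g : c ⟶ i.1.1) :
    (Gobj F κ j).obj (op c) :=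
  (colimit.ι (Dy F κ j) (.right i)).app (op c) g

theorem theta_iota (j : Idx F κ) (i : j.1.1) {c : C} (g : c ⟶ i.1.1) :
    (theta F κ j).app (op c) (iota F κ j i g) = F.map g.op i.1.2 := by
  have h : colimit.ι (Dy F κ j) (.right i) ≫ theta F κ j = yonedaEquiv.symm i.1.2 :=
    colimit.ι_desc (coconeF F κ j) (.right i)
  have h2 := ConcreteCategory.congr_hom (NatTrans.congr_app h (op c)) g
  exact h2

theorem gmap_iota {j j' : Idx F κ} (h : j ≤ j') (i : j.1.1) {c : C} (g : c ⟶ i.1.1) :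
    (Gmap F κ h).app (op c) (iota F κ j i g) = iota F κ j' ⟨i.1, h.1 i.2⟩ g := by
  have hh : colimit.ι (Dy F κ j) (.right i) ≫ Gmap F κ h =
      colimit.ι (Dy F κ j') (.right ⟨i.1, h.1 i.2⟩) := colimit.ι_desc _ _
  have h2 := ConcreteCategory.congr_hom (NatTrans.congr_app hh (op c)) g
  exact h2

theorem iota_rel (j : Idx F κ) (r : Rel F) (hr : r ∈ j.1.2) :
    iota F κ j ⟨r.x, (j.2.2.2 r hr).1⟩ r.f = iota F κ j ⟨r.y, (j.2.2.2 r hr).2⟩ (𝟙 _) := by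
  have h1 := ConcreteCategory.congr_hom (NatTrans.congr_app
    (colimit.w (Dy F κ j) (WalkingMultispan.Hom.fst (J := mshape F κ j) ⟨r, hr⟩)) (op r.y.1))
    (show ((Dy F κ j).obj (WalkingMultispan.left ⟨r, hr⟩)).obj (op r.y.1) from 𝟙 r.y.1)
  have h2 := ConcreteCategory.congr_hom (NatTrans.congr_app
    (colimit.w (Dy F κ j) (WalkingMultispan.Hom.snd (J := mshape F κ j) ⟨r, hr⟩)) (op r.y.1))
    (show ((Dy F κ j).obj (WalkingMultispan.left ⟨r, hr⟩)).obj (op r.y.1) from 𝟙 r.y.1)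
  simp only [NatTrans.comp_app, ConcreteCategory.comp_apply] at h1 h2
  have hg1 : ((Dy F κ j).map (WalkingMultispan.Hom.fst (J := mshape F κ j) ⟨r, hr⟩)).app (op r.y.1)
      ((𝟙 r.y.1 : ((Dy F κ j).obj (WalkingMultispan.left ⟨r, hr⟩)).obj (op r.y.1))) =
      r.f := Category.id_comp r.f
  have hg2 : ((Dy F κ j).map (WalkingMultispan.Hom.snd (J := mshape F κ j) ⟨r, hr⟩)).app (op r.y.1)
      ((𝟙 r.y.1 : ((Dy F κ j).obj (WalkingMultispan.left ⟨r, hr⟩)).obj (op r.y.1))) =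
      𝟙 r.y.1 := Category.id_comp (𝟙 r.y.1)
  exact (congrArg (iota F κ j ⟨r.x, (j.2.2.2 r hr).1⟩) hg1.symm).trans
    (h1.trans (h2.symm.trans (congrArg (iota F κ j ⟨r.y, (j.2.2.2 r hr).2⟩) hg2)))

theorem exists_iota (j : Idx F κ) {c : C} (u : (Gobj F κ j).obj (op c)) :
    ∃ (i : j.1.1) (g : c ⟶ i.1.1), u = iota F κ j i g := by
  have hcl := isColimitOfPreserves ((evaluation Cᵒᵖ (Type u)).obj (op c))
    (colimit.isColimit (Dy F κ j))
  obtain ⟨a, y, hy⟩ := Types.jointly_surjective _ hcl u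
  cases a with
  | right i => exact ⟨i, y, hy.symm⟩
  | left r =>
    refine ⟨(mshape F κ j).snd r, y, ?_⟩
    rw [← hy]
    have h2 := ConcreteCategory.congr_hom (NatTrans.congr_app (colimit.w (Dy F κ j) (WalkingMultispan.Hom.snd r)) (op c)) y
    simp only [NatTrans.comp_app, ConcreteCategory.comp_apply] at h2
    have hg : ((Dy F κ j).map (WalkingMultispan.Hom.snd r)).app (op c) y = y :=
      Category.comp_id y
    rw [hg] at h2
    exact h2.symm

theorem mk_arrow_multispan_lt (hκ : κ.IsRegular) {L R : Type u} (fst snd : L → R)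
    (hL : Cardinal.mk L < κ) (hR : Cardinal.mk R < κ) :
    Cardinal.mk (Arrow (WalkingMultispan (MultispanShape.mk L R fst snd))) < κ := by
  have hobj : Cardinal.mk (WalkingMultispan (MultispanShape.mk L R fst snd)) < κ := by
    have hle : Cardinal.mk (WalkingMultispan (MultispanShape.mk L R fst snd)) ≤ Cardinal.mk (L ⊕ R) := by
      refine Cardinal.mk_le_of_injective (f := fun x => match x with
        | .left a => (Sum.inl a : L ⊕ R)
        | .right b => Sum.inr b) ?_
      rintro (a | b) (a' | b') h <;> simp_all
    refine hle.trans_lt ?_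
    simp only [Cardinal.mk_sum, Cardinal.lift_id]
    exact Cardinal.add_lt_of_lt hκ.aleph0_le hL hR
  have harr : Cardinal.mk (Arrow (WalkingMultispan (MultispanShape.mk L R fst snd))) ≤
      Cardinal.mk ((WalkingMultispan (MultispanShape.mk L R fst snd)) ⊕ (L ⊕ L)) := by
    refine Cardinal.mk_le_of_injective (f := fun m =>
      (match m with
        | ⟨_, _, h⟩ => (match h with
          | .id X => (Sum.inl X : (WalkingMultispan (MultispanShape.mk L R fst snd)) ⊕ (L ⊕ L))
          | .fst a => Sum.inr (Sum.inl a)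
          | .snd a => Sum.inr (Sum.inr a)))) ?_
    rintro ⟨X, Y, h⟩ ⟨X', Y', h'⟩ hmm
    cases h using WalkingMultispan.Hom.casesOn <;> cases h' using WalkingMultispan.Hom.casesOn <;> simp_all <;> subst hmm <;> rfl
  refine harr.trans_lt ?_
  simp only [Cardinal.mk_sum, Cardinal.lift_id]
  exact Cardinal.add_lt_of_lt hκ.aleph0_le hobj (Cardinal.add_lt_of_lt hκ.aleph0_le hL hL)

theorem kappaFiltered_idx (hκ : κ.IsRegular) : KappaFiltered κ (Idx F κ) := by
  intro A _ hA T
  have hobj : Cardinal.mk A < κ := by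
    refine lt_of_le_of_lt (Cardinal.mk_le_of_injective
      (f := fun a : A => Arrow.mk (𝟙 a)) ?_) hA
    intro a b h
    exact congrArg Comma.left h
  have h1 : Cardinal.mk (⋃ a, (T.obj a).1.1 : Set (Elt F)) < κ := by
    refine lt_of_le_of_lt (Cardinal.mk_iUnion_le _) ?_
    exact Cardinal.mul_lt_of_lt hκ.aleph0_le hobj
      (Cardinal.iSup_lt_of_isRegular hκ hobj fun a => (T.obj a).2.1)
  have h2 : Cardinal.mk (⋃ a, (T.obj a).1.2 : Set (Rel F)) < κ := by
    refine lt_of_le_of_lt (Cardinal.mk_iUnion_le _) ?_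
    exact Cardinal.mul_lt_of_lt hκ.aleph0_le hobj
      (Cardinal.iSup_lt_of_isRegular hκ hobj fun a => (T.obj a).2.2.1)
  have hcl : ∀ r ∈ (⋃ a, (T.obj a).1.2 : Set (Rel F)),
      r.x ∈ (⋃ a, (T.obj a).1.1 : Set (Elt F)) ∧ r.y ∈ ⋃ a, (T.obj a).1.1 := by
    intro r hr
    obtain ⟨a, ha⟩ := Set.mem_iUnion.1 hr
    obtain ⟨hx, hy⟩ := (T.obj a).2.2.2 r ha
    exact ⟨Set.mem_iUnion.2 ⟨a, hx⟩, Set.mem_iUnion.2 ⟨a, hy⟩⟩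
  exact ⟨{ pt := ⟨(⋃ a, (T.obj a).1.1, ⋃ a, (T.obj a).1.2), h1, h2, hcl⟩
           ι := { app := fun a => homOfLE
                    ⟨fun x hx => Set.mem_iUnion.2 ⟨a, hx⟩, fun x hx => Set.mem_iUnion.2 ⟨a, hx⟩⟩
                  naturality := fun _ _ _ => rfl } }⟩

theorem empty_good (hκ : κ.IsRegular) : Good F κ ((∅ : Set (Elt F)), (∅ : Set (Rel F))) :=
  ⟨by simpa using hκ.pos, by simpa using hκ.pos, by simp⟩

theorem union_good (hκ : κ.IsRegular) (j k : Idx F κ) :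
    Good F κ (j.1.1 ∪ k.1.1, j.1.2 ∪ k.1.2) := by
  refine ⟨?_, ?_, ?_⟩
  · exact (Cardinal.mk_union_le _ _).trans_lt
      (Cardinal.add_lt_of_lt hκ.aleph0_le j.2.1 k.2.1)
  · exact (Cardinal.mk_union_le _ _).trans_lt
      (Cardinal.add_lt_of_lt hκ.aleph0_le j.2.2.1 k.2.2.1)
  · rintro r (hr | hr)
    · exact ⟨Set.mem_union_left _ (j.2.2.2 r hr).1, Set.mem_union_left _ (j.2.2.2 r hr).2⟩
    · exact ⟨Set.mem_union_right _ (k.2.2.2 r hr).1, Set.mem_union_right _ (k.2.2.2 r hr).2⟩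

noncomputable def cocFIsColimit (hκ : κ.IsRegular) : IsColimit (cocF F κ) := by
  haveI : Nonempty (Idx F κ) := ⟨⟨(∅, ∅), empty_good F κ hκ⟩⟩
  haveI : IsDirected (Idx F κ) (· ≤ ·) :=
    ⟨fun j k => ⟨⟨_, union_good F κ hκ j k⟩,
      ⟨Set.subset_union_left, Set.subset_union_left⟩,
      ⟨Set.subset_union_right, Set.subset_union_right⟩⟩⟩
  refine evaluationJointlyReflectsColimits _ (fun k => ?_)
  obtain ⟨c⟩ := k
  refine Types.FilteredColimit.isColimitOf _ _ ?_ ?_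
  · -- joint surjectivity
    intro x
    have hsing : Good F κ ({(⟨c, x⟩ : Elt F)}, (∅ : Set (Rel F))) :=
      ⟨by simpa using Cardinal.one_lt_aleph0.trans_le hκ.aleph0_le,
       by simpa using hκ.pos, by simp⟩
    refine ⟨⟨({⟨c, x⟩}, ∅), hsing⟩,
      iota F κ _ ⟨⟨c, x⟩, Set.mem_singleton _⟩ (𝟙 c), ?_⟩
    have ht := theta_iota F κ ⟨({⟨c, x⟩}, ∅), hsing⟩ ⟨⟨c, x⟩, Set.mem_singleton _⟩ (𝟙 c)
    simp at ht
    exact ht.symm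
  · -- when two elements are identified in F
    intro j k' u v huv
    obtain ⟨i₁, g₁, rfl⟩ := exists_iota F κ j u
    obtain ⟨i₂, g₂, rfl⟩ := exists_iota F κ k' v
    have h1 := theta_iota F κ j i₁ g₁
    have h2 := theta_iota F κ k' i₂ g₂
    replace huv : F.map g₁.op i₁.1.2 = F.map g₂.op i₂.1.2 := by
      rw [← h1, ← h2]; exact huv
    set z : F.obj (op c) := F.map g₁.op i₁.1.2 with hz
    have hr1 : F.map g₁.op i₁.1.2 = ((⟨c, z⟩ : Elt F)).2 := rfl
    have hr2 : F.map g₂.op i₂.1.2 = ((⟨c, z⟩ : Elt F)).2 := huv.symm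
    set r₁ : Rel F := ⟨i₁.1, ⟨c, z⟩, g₁, hr1⟩ with hr₁def
    set r₂ : Rel F := ⟨i₂.1, ⟨c, z⟩, g₂, hr2⟩ with hr₂def
    have hgood : Good F κ ((j.1.1 ∪ k'.1.1) ∪ {(⟨c, z⟩ : Elt F)},
        (j.1.2 ∪ k'.1.2) ∪ {r₁, r₂}) := by
      refine ⟨?_, ?_, ?_⟩
      · refine (Cardinal.mk_union_le _ _).trans_lt (Cardinal.add_lt_of_lt hκ.aleph0_le
          ((union_good F κ hκ j k').1) ?_)
        simpa using Cardinal.one_lt_aleph0.trans_le hκ.aleph0_le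
      · refine (Cardinal.mk_union_le _ _).trans_lt (Cardinal.add_lt_of_lt hκ.aleph0_le
          ((union_good F κ hκ j k').2.1) ?_)
        rw [Set.insert_eq]
        refine (Cardinal.mk_union_le _ _).trans_lt ?_
        simp only [Cardinal.mk_singleton]
        exact Cardinal.add_lt_of_lt hκ.aleph0_le
          (Cardinal.one_lt_aleph0.trans_le hκ.aleph0_le)
          (Cardinal.one_lt_aleph0.trans_le hκ.aleph0_le)
      · rintro r ((hr | hr) | hr)
        · exact ⟨Set.mem_union_left _ (Set.mem_union_left _ (j.2.2.2 r hr).1),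
            Set.mem_union_left _ (Set.mem_union_left _ (j.2.2.2 r hr).2)⟩
        · exact ⟨Set.mem_union_left _ (Set.mem_union_right _ (k'.2.2.2 r hr).1),
            Set.mem_union_left _ (Set.mem_union_right _ (k'.2.2.2 r hr).2)⟩
        · rcases hr with hr | hr
          · subst hr
            exact ⟨Set.mem_union_left _ (Set.mem_union_left _ i₁.2),
              Set.mem_union_right _ (Set.mem_singleton _)⟩
          · rw [Set.mem_singleton_iff] at hr
            subst hr
            exact ⟨Set.mem_union_left _ (Set.mem_union_right _ i₂.2),
              Set.mem_union_right _ (Set.mem_singleton _)⟩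
    set l : Idx F κ := ⟨_, hgood⟩ with hldef
    have hjl : j ≤ l := ⟨(Set.subset_union_left).trans Set.subset_union_left,
      (Set.subset_union_left).trans Set.subset_union_left⟩
    have hkl : k' ≤ l := ⟨(Set.subset_union_right).trans Set.subset_union_left,
      (Set.subset_union_right).trans Set.subset_union_left⟩
    have hmem1 : r₁ ∈ l.1.2 := Set.mem_union_right _ (Set.mem_insert _ _)
    have hmem2 : r₂ ∈ l.1.2 := Set.mem_union_right _ (Set.mem_insert_of_mem _ rfl)
    refine ⟨l, homOfLE hjl, homOfLE hkl, ?_⟩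
    have e1 := gmap_iota F κ hjl i₁ g₁
    have e2 := gmap_iota F κ hkl i₂ g₂
    have key : iota F κ l ⟨i₁.1, hjl.1 i₁.2⟩ g₁ = iota F κ l ⟨i₂.1, hkl.1 i₂.2⟩ g₂ := by
      have w1 := iota_rel F κ l r₁ hmem1
      have w2 := iota_rel F κ l r₂ hmem2
      exact w1.trans w2.symm
    show (Gmap F κ hjl).app (op c) (iota F κ j i₁ g₁) =
      (Gmap F κ hkl).app (op c) (iota F κ k' i₂ g₂)
    rw [e1, e2]
    exact key

theorem reflects_of_kappaCompact' [IsIdempotentComplete C] (hκ : κ.IsRegular)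
    (hcolim : ∀ (K : Type u) [SmallCategory K], Cardinal.mk (Arrow K) < κ →
      HasColimitsOfShape K C)
    (hF : KappaCompact κ F) : Reflects F := by
  obtain ⟨hmc⟩ := hF (Idx F κ) (kappaFiltered_idx F κ hκ) (Gfun F κ) (cocF F κ)
    ⟨cocFIsColimit F κ hκ⟩
  obtain ⟨j, s, hs⟩ := Types.jointly_surjective _ hmc (𝟙 F)
  haveI : HasColimitsOfShape (WalkingMultispan (mshape F κ j)) C := hcolim _
    (mk_arrow_multispan_lt κ hκ (mshape F κ j).fst (mshape F κ j).snd j.2.2.1 j.2.1)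
  have hrefl : Reflects (Gobj F κ j) := reflects_colimit (mindex F κ j).multispan
  exact reflects_retract s (theta F κ j) hs hrefl

end StepC

theorem kappaCompact_yoneda (κ : Cardinal.{u}) (c : C) : KappaCompact κ (yoneda.obj c) := by
  intro J _ _ Dg cc hcc
  obtain ⟨h⟩ := hcc
  constructor
  have ev : coyoneda.obj (op (yoneda.obj c)) ≅ (evaluation Cᵒᵖ (Type u)).obj (op c) :=
    NatIso.ofComponents (fun G => Equiv.toIso yonedaEquiv) (by
      intro G G' g
      ext f
      exact yonedaEquiv_comp f g)
  exact IsColimit.mapCoconeEquiv ev.symm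
    (isColimitOfPreserves ((evaluation Cᵒᵖ (Type u)).obj (op c)) h)

theorem reflects_of_kappaCompact [IsIdempotentComplete C] {κ : Cardinal.{u}}
    (hκ : κ.IsRegular)
    (hcolim : ∀ (K : Type u) [SmallCategory K], Cardinal.mk (Arrow K) < κ →
      HasColimitsOfShape K C)
    (F : Cᵒᵖ ⥤ Type u) (hF : KappaCompact κ F) : Reflects F :=
  reflects_of_kappaCompact' F κ hκ hcolim hF

end Stmt13

open Stmt13 in
/-- Let `C` be a small idempotent-complete category admitting `κ`-small
colimits, for `κ` a regular cardinal.  Then the Yoneda embedding `j : C ⥤ P(C)^κ` into the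
`κ`-compact presheaves admits a left adjoint. -/
theorem stmt13 {C : Type u} [SmallCategory C] [IsIdempotentComplete C]
    (κ : Cardinal.{u}) (hκ : κ.IsRegular)
    (hcolim : ∀ (K : Type u) [SmallCategory K], Cardinal.mk (Arrow K) < κ →
      HasColimitsOfShape K C) :
    ∃ j : C ⥤ ObjectProperty.FullSubcategory fun F : Cᵒᵖ ⥤ Type u => KappaCompact κ F,
      j ⋙ ObjectProperty.ι _ = yoneda ∧ j.IsRightAdjoint := by
  refine ⟨ObjectProperty.lift _ yoneda (fun c => kappaCompact_yoneda κ c), rfl, ?_⟩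
  have hinit : ∀ X : ObjectProperty.FullSubcategory fun F : Cᵒᵖ ⥤ Type u => KappaCompact κ F,
      HasInitial (StructuredArrow X
        (ObjectProperty.lift _ yoneda (fun c => kappaCompact_yoneda κ c))) := by
    intro X
    obtain ⟨c, η, hη⟩ := reflects_of_kappaCompact hκ hcolim X.obj X.property
    refine IsInitial.hasInitial (X := StructuredArrow.mk (Y := c) (ObjectProperty.homMk η : X ⟶ _)) ?_
    refine IsInitial.ofUniqueHom (fun Y => StructuredArrow.homMk (hη Y.right Y.hom.hom).choose
      (ObjectProperty.hom_ext (P := fun F : Cᵒᵖ ⥤ Type u => KappaCompact κ F) (hη Y.right Y.hom.hom).choose_spec.1)) ?_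
    intro Y m
    apply StructuredArrow.hom_ext
    exact (hη Y.right Y.hom.hom).choose_spec.2 m.right (congrArg (fun f => f.hom) (StructuredArrow.w m))

  exact isRightAdjointOfStructuredArrowInitials _
end

section
/- Let C be a small category, κ a regular cardinal, and let Ind_κ(C) ⊆ P(C) be the κ-Ind-completion, with canonical fully faithful embedding i : C → Ind_κ(C). Then the idempotent completion of C is equivalent to the full subcategory Ind_κ(C)^κ of κ-compact objects of Ind_κ(C), via the embedding i; in particular, if C is idempotent-complete then i induces an equivalence C ≃ Ind_κ(C)^κ. -/
open CategoryTheory Limits Opposite CategoryTheory.Idempotents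

universe u

/-- A presheaf is a `κ`-Ind-object if it is a `κ`-filtered colimit of representables; the full
subcategory of such presheaves is the `κ`-Ind-completion `Ind_κ(C)`. -/
def IsIndKappaObject {C : Type u} [SmallCategory C] (κ : Cardinal.{u})
    (F : Cᵒᵖ ⥤ Type u) : Prop :=
  ∃ J : Cat.{u, u}, KappaFiltered κ J ∧
    ∃ (d : J ⥤ C) (c : Cocone (d ⋙ yoneda)), Nonempty (IsColimit c) ∧ Nonempty (c.pt ≅ F)

namespace Stmt19Aux

/-- Parallel pair gadget category in `Type u`. -/
inductive PP : Type u | a | b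

def PPHom : PP.{u} → PP.{u} → Type u
  | .a, .a => PUnit
  | .a, .b => ULift Bool
  | .b, .a => PEmpty
  | .b, .b => PUnit

instance : SmallCategory PP.{u} where
  Hom := PPHom
  id X := match X with | .a => ⟨⟩ | .b => ⟨⟩
  comp {X Y Z} f g := match X, Y, Z, f, g with
    | .a, .a, .a, _, _ => ⟨⟩
    | .a, .a, .b, _, g => g
    | .a, .b, .b, f, _ => f
    | .b, .b, .b, _, _ => ⟨⟩
    | .a, .b, .a, _, g => g.elim
    | .b, .a, _, f, _ => f.elim
  id_comp {X Y} f := by cases X <;> cases Y <;> cases f <;> rfl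
  comp_id {X Y} f := by cases X <;> cases Y <;> cases f <;> rfl
  assoc {W X Y Z} f g h := by
    cases W <;> cases X <;> cases Y <;> cases Z <;> cases f <;> cases g <;> cases h <;> rfl

def ppFunctor {J : Type u} [SmallCategory J] {X Y : J} (f g : X ⟶ Y) : PP.{u} ⥤ J where
  obj P := match P with | .a => X | .b => Y
  map {P Q} h := match P, Q, h with
    | .a, .a, _ => 𝟙 X
    | .b, .b, _ => 𝟙 Y
    | .a, .b, h => if h.down then f else g
    | .b, .a, h => h.elim
  map_id P := by cases P <;> rfl
  map_comp {P Q R} h h' := by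
    cases P <;> cases Q <;> cases R <;> rcases h with _ | _ <;> rcases h' with _ | _ <;> simp <;> rfl

lemma pp_arrow_card : Cardinal.mk (Arrow PP.{u}) < Cardinal.aleph0 := by
  haveI : ∀ X Y : PP.{u}, Finite (PPHom X Y) := by
    intro X Y; cases X <;> cases Y <;> dsimp [PPHom] <;> infer_instance
  haveI : Finite PP.{u} := by
    have hinj : Function.Injective
        (fun p : PP.{u} => match p with | .a => true | .b => false) := by
      rintro ⟨⟩ ⟨⟩ h <;> simp_all
    exact Finite.of_injective _ hinj
  haveI : Finite (Σ (X Y : PP.{u}), PPHom X Y) := inferInstance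
  have hinj : Function.Injective (fun f : Arrow PP.{u} =>
      (⟨f.left, f.right, f.hom⟩ : Σ (X Y : PP.{u}), PPHom X Y)) := by
    rintro ⟨fl, fr, fh⟩ ⟨gl, gr, gh⟩ h
    obtain rfl : fl = gl := congrArg Sigma.fst h
    obtain rfl : fr = gr := congrArg (fun p => p.2.1) h
    obtain rfl : fh = gh := by simpa using h
    rfl
  haveI : Finite (Arrow PP.{u}) := Finite.of_injective _ hinj
  exact Cardinal.lt_aleph0_of_finite _



/-- The one-object category with a single nonidentity idempotent. -/
inductive BIdem : Type u | star

instance : SmallCategory BIdem.{u} where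
  Hom _ _ := ULift Bool
  id _ := ⟨false⟩
  comp f g := if g.down then ⟨true⟩ else f
  id_comp f := by rcases f with ⟨_ | _⟩ <;> rfl
  comp_id f := by rcases f with ⟨_ | _⟩ <;> rfl
  assoc f g h := by rcases g with ⟨_ | _⟩ <;> rcases h with ⟨_ | _⟩ <;> rfl

lemma bIdem_kappaFiltered (κ : Cardinal.{u}) : KappaFiltered κ BIdem.{u} := by
  intro A _ _ F
  exact ⟨{ pt := BIdem.star
           ι := { app := fun _ => ⟨true⟩, naturality := fun _ _ _ => rfl } }⟩

def bIdemFunctor {C : Type u} [SmallCategory C] {X : C} (e : X ⟶ X) (he : e ≫ e = e) :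
    BIdem.{u} ⥤ C where
  obj _ := X
  map f := if f.down then e else 𝟙 X
  map_id _ := rfl
  map_comp {P Q R} f g := by
    rcases f with ⟨_ | _⟩ <;> rcases g with ⟨_ | _⟩
    · show 𝟙 X = 𝟙 X ≫ 𝟙 X; simp
    · show e = 𝟙 X ≫ e; simp
    · show e = e ≫ 𝟙 X; simp
    · show e = e ≫ e; rw [he]

/-! ### Cardinal helpers -/

lemma mk_obj_le_mk_arrow (A : Type u) [SmallCategory A] :
    Cardinal.mk A ≤ Cardinal.mk (Arrow A) := by
  apply Cardinal.mk_le_of_injective (f := fun a => Arrow.mk (𝟙 a))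
  intro a b h
  exact congrArg (fun ar => ar.left) h

lemma mk_arrow_lt_of_thin {κ : Cardinal.{u}} (hκ : Cardinal.IsRegular κ)
    (A : Type u) [SmallCategory A] [Quiver.IsThin A]
    (hA : Cardinal.mk A < κ) : Cardinal.mk (Arrow A) < κ := by
  have hinj : Function.Injective (fun f : Arrow A => (f.left, f.right)) := by
    rintro ⟨fl, fr, fh⟩ ⟨gl, gr, gh⟩ h
    obtain rfl : fl = gl := congrArg Prod.fst h
    obtain rfl : fr = gr := congrArg Prod.snd h
    obtain rfl : fh = gh := Subsingleton.elim _ _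
    rfl
  have := Cardinal.mk_le_of_injective hinj
  refine lt_of_le_of_lt this ?_
  rw [Cardinal.mk_prod]
  simpa using Cardinal.mul_lt_of_lt hκ.aleph0_le hA hA

/-! ### Consequences of `κ`-filteredness -/

section KFiltered

variable {κ : Cardinal.{u}} (hκ : Cardinal.IsRegular κ)
variable {K : Type u} [SmallCategory K] (hK : KappaFiltered κ K)

include hκ hK

lemma kappaFiltered_nonempty : Nonempty K := by
  have h0 : Cardinal.mk (Arrow (Discrete PEmpty.{u + 1})) < κ := by
    have : IsEmpty (Arrow (Discrete PEmpty.{u + 1})) :=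
      ⟨fun f => f.left.as.elim⟩
    simpa [Cardinal.mk_eq_zero] using hκ.pos
  obtain ⟨c⟩ := hK _ h0 (Functor.empty K)
  exact ⟨c.pt⟩

lemma exists_sup {S : Type u} (hS : Cardinal.mk S < κ) (k : S → K) :
    ∃ (ℓ : K) (v : ∀ s, k s ⟶ ℓ), True := by
  have harr : Cardinal.mk (Arrow (Discrete S)) < κ :=
    mk_arrow_lt_of_thin hκ _ (by rw [Cardinal.mk_congr (discreteEquiv (α := S))]; exact hS)
  obtain ⟨c⟩ := hK _ harr (Discrete.functor k)
  exact ⟨c.pt, fun s => c.ι.app ⟨s⟩, trivial⟩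

lemma exists_fan {S : Type u} (hS : Cardinal.mk S < κ) (k₀ : K) (k : S → K)
    (w : ∀ s, k₀ ⟶ k s) :
    ∃ (ℓ : K) (v₀ : k₀ ⟶ ℓ) (v : ∀ s, k s ⟶ ℓ), ∀ s, w s ≫ v s = v₀ := by
  have hobj : Cardinal.mk (WidePushoutShape S) < κ := by
    have : Cardinal.mk (WidePushoutShape S) = Cardinal.mk S + 1 := by
      simpa [WidePushoutShape] using Cardinal.mk_option (α := S)
    rw [this]
    exact Cardinal.add_lt_of_lt hκ.aleph0_le hS
      (lt_of_lt_of_le Cardinal.one_lt_aleph0 hκ.aleph0_le)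
  have harr : Cardinal.mk (Arrow (WidePushoutShape S)) < κ :=
    mk_arrow_lt_of_thin hκ _ hobj
  obtain ⟨c⟩ := hK _ harr (WidePushoutShape.wideSpan k₀ k w)
  refine ⟨c.pt, c.ι.app none, fun s => c.ι.app (some s), fun s => ?_⟩
  have := c.w (WidePushoutShape.Hom.init s)
  simpa [WidePushoutShape.wideSpan] using this

lemma kappaFiltered_isFiltered : IsFiltered K := by
  have hne : Nonempty K := kappaFiltered_nonempty hκ hK
  have hobjs : ∀ X Y : K, ∃ (Z : K) (_ : X ⟶ Z) (_ : Y ⟶ Z), True := by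
    intro X Y
    have hS : Cardinal.mk (ULift.{u} Bool) < κ :=
      lt_of_lt_of_le (Cardinal.lt_aleph0_of_finite _) hκ.aleph0_le
    obtain ⟨ℓ, v, -⟩ := exists_sup hκ hK hS (fun s => if s.down then X else Y)
    exact ⟨ℓ, v ⟨true⟩, v ⟨false⟩, trivial⟩
  have hmaps : ∀ ⦃X Y : K⦄ (f g : X ⟶ Y), ∃ (Z : K) (h : Y ⟶ Z), f ≫ h = g ≫ h := by
    intro X Y f g
    have harr : Cardinal.mk (Arrow PP.{u}) < κ :=
      lt_of_lt_of_le pp_arrow_card hκ.aleph0_le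
    obtain ⟨c⟩ := hK _ harr (ppFunctor f g)
    refine ⟨c.pt, c.ι.app .b, ?_⟩
    have h1 := c.w (show PP.a ⟶ PP.b from ⟨true⟩)
    have h2 := c.w (show PP.a ⟶ PP.b from ⟨false⟩)
    simp only [ppFunctor] at h1 h2
    simp only [if_true, eq_self_iff_true, if_pos trivial] at h1
    rw [if_neg (by simp)] at h2
    rw [h1, h2]
  exact { nonempty := hne
          cocone_objs := hobjs
          cocone_maps := hmaps }

end KFiltered

/-- In a filtered colimit of types, two elements at a common stage that agree in the colimit
are identified by a single arrow. -/
lemma exists_eq_map {K : Type u} [SmallCategory K] [IsFiltered K]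
    (T : K ⥤ Type u) {c : Cocone T} (hc : IsColimit c) {k : K} {x y : T.obj k}
    (h : c.ι.app k x = c.ι.app k y) :
    ∃ (k' : K) (w : k ⟶ k'), T.map w x = T.map w y := by
  obtain ⟨k₁, f, g, hfg⟩ := (Types.FilteredColimit.isColimit_eq_iff T hc).mp h
  refine ⟨IsFiltered.coeq f g, f ≫ IsFiltered.coeqHom f g, ?_⟩
  have hcond : f ≫ IsFiltered.coeqHom f g = g ≫ IsFiltered.coeqHom f g :=
    IsFiltered.coeq_condition f g
  calc T.map (f ≫ IsFiltered.coeqHom f g) x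
      = T.map (IsFiltered.coeqHom f g) (T.map f x) := by simp
    _ = T.map (IsFiltered.coeqHom f g) (T.map g y) := by rw [hfg]
    _ = T.map (g ≫ IsFiltered.coeqHom f g) y := by simp
    _ = T.map (f ≫ IsFiltered.coeqHom f g) y := by rw [hcond]

/-- Master staging lemma: a `<κ`-family of elements of `κ`-filtered colimits of types,
together with `<κ`-many compatibilities, descends to a single stage. -/
lemma stage {κ : Cardinal.{u}} (hκ : Cardinal.IsRegular κ)
    {K : Type u} [SmallCategory K] (hK : KappaFiltered κ K) [IsFiltered K]
    {I : Type u} (hI : Cardinal.mk I < κ)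
    (T : I → K ⥤ Type u) (c : ∀ i, Cocone (T i)) (hc : ∀ i, IsColimit (c i))
    (x : ∀ i, (c i).pt)
    {R : Type u} (hR : Cardinal.mk R < κ) (src tgt : R → I)
    (θ : ∀ ρ, T (tgt ρ) ⟶ T (src ρ))
    (M : ∀ ρ, (c (tgt ρ)).pt → (c (src ρ)).pt)
    (hM : ∀ ρ k y, (c (src ρ)).ι.app k ((θ ρ).app k y) = M ρ ((c (tgt ρ)).ι.app k y))
    (hMx : ∀ ρ, M ρ (x (tgt ρ)) = x (src ρ)) :
    ∃ (ℓ : K) (x' : ∀ i, (T i).obj ℓ),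
      (∀ i, (c i).ι.app ℓ (x' i) = x i) ∧
      ∀ ρ, (θ ρ).app ℓ (x' (tgt ρ)) = x' (src ρ) := by
  -- step 1: find individual stages
  have h1 : ∀ i, ∃ (k : K) (y : (T i).obj k), (c i).ι.app k y = x i := by
    intro i
    obtain ⟨k, y, hy⟩ := Types.jointly_surjective (T i) (hc i) (x i)
    exact ⟨k, y, hy⟩
  choose k₁ y₁ hy₁ using h1
  -- step 2: common stage k₀
  obtain ⟨k₀, v, -⟩ := exists_sup hκ hK hI k₁
  set y₀ : ∀ i, (T i).obj k₀ := fun i => (T i).map (v i) (y₁ i) with hy₀def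
  have hy₀ : ∀ i, (c i).ι.app k₀ (y₀ i) = x i := by
    intro i
    have := ConcreteCategory.congr_hom ((c i).w (v i)) (y₁ i)
    simpa [hy₀def] using this.trans (hy₁ i)
  -- step 3: equalize each relation
  have h3 : ∀ ρ, ∃ (k' : K) (w : k₀ ⟶ k'),
      (T (src ρ)).map w ((θ ρ).app k₀ (y₀ (tgt ρ))) = (T (src ρ)).map w (y₀ (src ρ)) := by
    intro ρ
    apply exists_eq_map (T (src ρ)) (hc (src ρ))
    rw [hM ρ k₀ (y₀ (tgt ρ)), hy₀ (tgt ρ), hy₀ (src ρ), hMx ρ]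
  choose kρ wρ hwρ using h3
  -- step 4: fan over relations
  obtain ⟨ℓ, v₀, vρ, hv⟩ := exists_fan hκ hK hR k₀ kρ wρ
  refine ⟨ℓ, fun i => (T i).map v₀ (y₀ i), fun i => ?_, fun ρ => ?_⟩
  · have := ConcreteCategory.congr_hom ((c i).w v₀) (y₀ i)
    simpa using this.trans (hy₀ i)
  · have hnat := ConcreteCategory.congr_hom ((θ ρ).naturality v₀) (y₀ (tgt ρ))
    dsimp at hnat ⊢
    rw [hnat, ← hv ρ]
    rw [FunctorToTypes.map_comp_apply, FunctorToTypes.map_comp_apply, hwρ ρ]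

end Stmt19Aux

namespace Stmt19Aux

variable {C : Type u} [SmallCategory C]

section EvCocone

variable {K : Type u} [SmallCategory K] (d : K ⥤ C) {P : Cᵒᵖ ⥤ Type u}
  (c₀ : Cocone (d ⋙ yoneda)) (φ : c₀.pt ≅ P)

/-- The evaluation at `co` of a colimit presentation of `P`, as a cocone of types. -/
@[simps]
def evCocone (co : Cᵒᵖ) :
    Cocone (d ⋙ yoneda ⋙ (evaluation Cᵒᵖ (Type u)).obj co) where
  pt := P.obj co
  ι :=
    { app := fun k => TypeCat.ofHom (fun g => φ.hom.app co ((c₀.ι.app k).app co g))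
      naturality := by
        intro k k' w
        ext g
        dsimp
        rw [← c₀.w w]
        dsimp }

noncomputable def evCoconeIsColimit (hc₀ : IsColimit c₀) (co : Cᵒᵖ) : IsColimit (evCocone d c₀ φ co) :=
  IsColimit.ofIsoColimit (isColimitOfPreserves ((evaluation Cᵒᵖ (Type u)).obj co) hc₀)
    (Cocones.ext (((evaluation Cᵒᵖ (Type u)).obj co).mapIso φ) (fun k => rfl))

lemma evCocone_naturality {co co' : Cᵒᵖ} (f : co ⟶ co') (k : K) (h : co.unop ⟶ d.obj k) :
    P.map f ((evCocone d c₀ φ co).ι.app k h) =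
      (evCocone d c₀ φ co').ι.app k (f.unop ≫ h) := by
  have := ConcreteCategory.congr_hom ((c₀.ι.app k ≫ φ.hom).naturality f) h
  dsimp at this ⊢
  exact this.symm

end EvCocone

/-- **Lemma B**: a `κ`-small diagram of representables over a `κ`-Ind presheaf admits a cocone. -/
lemma exists_cocone_costructured {κ : Cardinal.{u}} (hκ : Cardinal.IsRegular κ)
    {P : Cᵒᵖ ⥤ Type u} (hP : IsIndKappaObject κ P) {A : Type u} [SmallCategory A]
    (hA : Cardinal.mk (Arrow A) < κ) (G : A ⥤ CostructuredArrow yoneda P) :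
    Nonempty (Cocone G) := by
  obtain ⟨K, hKfil, d, c₀, ⟨hc₀⟩, ⟨φ⟩⟩ := hP
  haveI : IsFiltered K := kappaFiltered_isFiltered hκ hKfil
  obtain ⟨ℓ, h', hι, hrel⟩ := stage hκ hKfil (lt_of_le_of_lt (mk_obj_le_mk_arrow A) hA)
    (fun a => d ⋙ yoneda ⋙ (evaluation Cᵒᵖ (Type u)).obj (op ((G.obj a).left)))
    (fun a => evCocone d c₀ φ (op ((G.obj a).left)))
    (fun a => evCoconeIsColimit d c₀ φ hc₀ (op ((G.obj a).left)))
    (fun a => yonedaEquiv (G.obj a).hom)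
    hA (fun ρ => ρ.left) (fun ρ => ρ.right)
    (fun ρ =>
      { app := fun k => TypeCat.ofHom (fun h => (G.map ρ.hom).left ≫ h)
        naturality := by
          intro k k' w
          ext h
          dsimp
          rw [Category.assoc] })
    (fun ρ => P.map ((G.map ρ.hom).left).op)
    (by
      intro ρ k y
      exact (evCocone_naturality d c₀ φ ((G.map ρ.hom).left).op k y).symm)
    (by
      intro ρ
      exact (yonedaEquiv_naturality _ _).trans
        (congrArg yonedaEquiv (CostructuredArrow.w (G.map ρ.hom))))
  refine ⟨⟨CostructuredArrow.mk (c₀.ι.app ℓ ≫ φ.hom),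
    { app := fun a => CostructuredArrow.homMk (h' a) ?_
      naturality := ?_ }⟩⟩
  · apply yonedaEquiv.injective
    rw [yonedaEquiv_comp]
    rw [yonedaEquiv_yoneda_map]
    exact hι a
  · intro a a' α
    ext
    have := hrel (Arrow.mk α)
    dsimp at this ⊢
    exact this.trans (Category.comp_id _).symm

lemma kappaFiltered_costructured {κ : Cardinal.{u}} (hκ : Cardinal.IsRegular κ)
    {P : Cᵒᵖ ⥤ Type u} (hP : IsIndKappaObject κ P) :
    KappaFiltered κ (CostructuredArrow (yoneda (C := C)) P) := by
  intro A _ hA G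
  exact exists_cocone_costructured hκ hP hA G

lemma isIndKappa_of_kappaFiltered {κ : Cardinal.{u}} {P : Cᵒᵖ ⥤ Type u}
    (h : KappaFiltered κ (CostructuredArrow (yoneda (C := C)) P)) :
    IsIndKappaObject κ P :=
  ⟨Cat.of (CostructuredArrow yoneda P), h, CostructuredArrow.proj yoneda P,
    Presheaf.tautologicalCocone P, ⟨Presheaf.isColimitTautologicalCocone P⟩, ⟨Iso.refl P⟩⟩

/-- **Closure**: a `κ`-filtered colimit of `κ`-Ind objects is a `κ`-Ind object. -/
lemma closure {κ : Cardinal.{u}} (hκ : Cardinal.IsRegular κ)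
    {J : Type u} [SmallCategory J] (hJ : KappaFiltered κ J)
    (F : J ⥤ (Cᵒᵖ ⥤ Type u)) (hF : ∀ j, IsIndKappaObject κ (F.obj j))
    {c : Cocone F} (hc : IsColimit c) : IsIndKappaObject κ c.pt := by
  apply isIndKappa_of_kappaFiltered (κ := κ)
  intro A _ hA G
  haveI : IsFiltered J := kappaFiltered_isFiltered hκ hJ
  obtain ⟨j₀, y', hι, hrel⟩ := stage hκ hJ (lt_of_le_of_lt (mk_obj_le_mk_arrow A) hA)
    (fun a => F ⋙ (evaluation Cᵒᵖ (Type u)).obj (op ((G.obj a).left)))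
    (fun a => ((evaluation Cᵒᵖ (Type u)).obj (op ((G.obj a).left))).mapCocone c)
    (fun a => isColimitOfPreserves _ hc)
    (fun a => yonedaEquiv (G.obj a).hom)
    hA (fun ρ => ρ.left) (fun ρ => ρ.right)
    (fun ρ =>
      { app := fun j => TypeCat.ofHom (fun y => (F.obj j).map ((G.map ρ.hom).left).op y)
        naturality := by
          intro j j' w
          ext y
          have h := ConcreteCategory.congr_hom ((F.map w).naturality ((G.map ρ.hom).left).op) y
          dsimp at h ⊢
          exact h.symm })
    (fun ρ => c.pt.map ((G.map ρ.hom).left).op)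
    (by
      intro ρ j y
      have h := ConcreteCategory.congr_hom ((c.ι.app j).naturality ((G.map ρ.hom).left).op) y
      dsimp at h ⊢
      first
      | exact h
      | exact h.symm)
    (by
      intro ρ
      exact (yonedaEquiv_naturality _ _).trans
        (congrArg yonedaEquiv (CostructuredArrow.w (G.map ρ.hom))))
  let y2 : ∀ a, (F.obj j₀).obj (op ((G.obj a).left)) := y'
  have hι' : ∀ a, (c.ι.app j₀).app (op ((G.obj a).left)) (y2 a) =
      yonedaEquiv (G.obj a).hom := hι
  have hrel' : ∀ ρ : Arrow A,
      (F.obj j₀).map ((G.map ρ.hom).left).op (y2 ρ.right) = y2 ρ.left := hrel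
  -- lift the situation to `F.obj j₀`
  set G' : A ⥤ CostructuredArrow yoneda (F.obj j₀) :=
    { obj := fun a => CostructuredArrow.mk (yonedaEquiv.symm (y2 a))
      map := fun {a a'} α => CostructuredArrow.homMk (G.map α).left (by
        show yoneda.map (G.map α).left ≫ yonedaEquiv.symm (y2 a') = yonedaEquiv.symm (y2 a)
        rw [yonedaEquiv_symm_naturality_left]
        exact congrArg yonedaEquiv.symm (hrel' (Arrow.mk α)))
      map_id := by
        intro a
        ext
        simp
      map_comp := by
        intro a a' a'' α β
        ext
        simp } with hG'
  obtain ⟨cc⟩ := exists_cocone_costructured hκ (hF j₀) hA G'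
  refine ⟨⟨CostructuredArrow.mk (cc.pt.hom ≫ c.ι.app j₀),
    { app := fun a => CostructuredArrow.homMk (cc.ι.app a).left ?_
      naturality := ?_ }⟩⟩
  · have wA := CostructuredArrow.w (cc.ι.app a)
    dsimp at wA
    show yoneda.map (cc.ι.app a).left ≫ cc.pt.hom ≫ c.ι.app j₀ = (G.obj a).hom
    rw [← Category.assoc, wA]
    apply yonedaEquiv.injective
    rw [yonedaEquiv_comp]
    erw [Equiv.apply_symm_apply]
    exact hι' a
  · intro a a' α
    ext
    have := congrArg CommaMorphism.left (cc.w α)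
    dsimp at this ⊢
    rw [Category.comp_id]
    exact this

section Retract

variable {C : Type u} [SmallCategory C]

/-- A retract of a representable presheaf is a `κ`-Ind object. -/
lemma ind_of_retract (κ : Cardinal.{u}) {P : Cᵒᵖ ⥤ Type u} {X : C}
    (s : P ⟶ yoneda.obj X) (r : yoneda.obj X ⟶ P) (hsr : s ≫ r = 𝟙 P) :
    IsIndKappaObject κ P := by
  set e₀ : X ⟶ X := yoneda.preimage (r ≫ s) with he₀def
  have hmap : yoneda.map e₀ = r ≫ s := Functor.map_preimage _ _
  have he₀ : e₀ ≫ e₀ = e₀ := by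
    apply yoneda.map_injective
    rw [Functor.map_comp, hmap]
    calc (r ≫ s) ≫ r ≫ s = r ≫ (s ≫ r) ≫ s := by simp
      _ = r ≫ s := by rw [hsr, Category.id_comp]
  refine ⟨Cat.of BIdem.{u}, bIdem_kappaFiltered κ, bIdemFunctor e₀ he₀,
    { pt := P, ι := { app := fun _ => r, naturality := ?_ } }, ⟨?_⟩, ⟨Iso.refl P⟩⟩
  · rintro ⟨⟩ ⟨⟩ ⟨b⟩
    cases b
    · show yoneda.map (𝟙 X) ≫ r = r ≫ 𝟙 P
      simp
    · show yoneda.map e₀ ≫ r = r ≫ 𝟙 P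
      rw [hmap, Category.assoc, hsr]
  · refine { desc := fun t => s ≫ t.ι.app .star, fac := ?_, uniq := ?_ }
    · intro t j
      obtain ⟨⟩ := j
      have he : yoneda.map e₀ ≫ t.ι.app .star = t.ι.app .star :=
        t.w (show (BIdem.star : BIdem) ⟶ .star from ⟨true⟩)
      show r ≫ s ≫ t.ι.app .star = t.ι.app .star
      exact (Category.assoc r s _).symm.trans ((congrArg (· ≫ t.ι.app .star) hmap.symm).trans he)
    · intro t m hm
      have h := hm BIdem.star
      calc m = 𝟙 P ≫ m := (Category.id_comp m).symm
        _ = (s ≫ r) ≫ m := by rw [hsr]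
        _ = s ≫ t.ι.app .star := by rw [Category.assoc]; exact congrArg (s ≫ ·) h

/-- A retract of a representable is `κ`-compact in presheaves: mapping out of it
preserves `κ`-filtered colimits. -/
lemma isColimit_coyoneda_of_retract {κ : Cardinal.{u}} (hκ : Cardinal.IsRegular κ)
    {J : Type u} [SmallCategory J] (hJ : KappaFiltered κ J)
    {P : Cᵒᵖ ⥤ Type u} {X : C} (s : P ⟶ yoneda.obj X) (r : yoneda.obj X ⟶ P)
    (hsr : s ≫ r = 𝟙 P)
    (F : J ⥤ (Cᵒᵖ ⥤ Type u)) (c : Cocone F) (hc : IsColimit c) :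
    Nonempty (IsColimit ((coyoneda.obj (op P)).mapCocone c)) := by
  haveI : IsFiltered J := kappaFiltered_isFiltered hκ hJ
  set e₀ : X ⟶ X := yoneda.preimage (r ≫ s) with he₀def
  have hmap : yoneda.map e₀ = r ≫ s := Functor.map_preimage _ _
  have he₀ : e₀ ≫ e₀ = e₀ := by
    apply yoneda.map_injective
    rw [Functor.map_comp, hmap]
    calc (r ≫ s) ≫ r ≫ s = r ≫ (s ≫ r) ≫ s := by simp
      _ = r ≫ s := by rw [hsr, Category.id_comp]
  have hop : (e₀.op ≫ e₀.op : op X ⟶ op X) = e₀.op := by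
    rw [← op_comp, he₀]
  set T : J ⥤ Type u := F ⋙ (evaluation Cᵒᵖ (Type u)).obj (op X) with hT
  have hev : IsColimit (((evaluation Cᵒᵖ (Type u)).obj (op X)).mapCocone c) :=
    isColimitOfPreserves _ hc
  -- the fixed-point functor of the idempotent `e₀`
  set Sfix : J ⥤ Type u :=
    { obj := fun j => {u : (F.obj j).obj (op X) // (F.obj j).map e₀.op u = u}
      map := fun {j j'} w => TypeCat.ofHom (fun u => ⟨(F.map w).app (op X) u.1, by
        have hn := ConcreteCategory.congr_hom ((F.map w).naturality e₀.op) u.1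
        dsimp at hn ⊢
        rw [← hn, u.2]⟩)
      map_id := by
        intro j
        refine ConcreteCategory.hom_ext _ _ (fun u => ?_)
        apply Subtype.ext
        dsimp
        rw [F.map_id]
        rfl
      map_comp := by
        intro j j' j'' w w'
        refine ConcreteCategory.hom_ext _ _ (fun u => ?_)
        apply Subtype.ext
        dsimp
        rw [F.map_comp]
        rfl } with hSfix
  set cS : Cocone Sfix :=
    { pt := {u : c.pt.obj (op X) // c.pt.map e₀.op u = u}
      ι :=
        { app := fun j => TypeCat.ofHom (fun u => ⟨(c.ι.app j).app (op X) u.1, by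
            have hn := ConcreteCategory.congr_hom ((c.ι.app j).naturality e₀.op) u.1
            dsimp at hn ⊢
            rw [← hn, u.2]⟩)
          naturality := by
            intro j j' w
            refine ConcreteCategory.hom_ext _ _ (fun u => ?_)
            apply Subtype.ext
            dsimp
            exact ConcreteCategory.congr_hom (NatTrans.congr_app (c.w w) (op X)) u.1 } } with hcS
  have hS : IsColimit cS := by
    apply Types.FilteredColimit.isColimitOf Sfix cS
    · rintro ⟨u, hu⟩
      obtain ⟨j, v, hv⟩ := Types.jointly_surjective T hev u
      have hv' : (c.ι.app j).app (op X) v = u := hv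
      set z : T.obj j := (F.obj j).map e₀.op v with hzdef
      have hz : (c.ι.app j).app (op X) z = u := by
        have hn := ConcreteCategory.congr_hom ((c.ι.app j).naturality e₀.op) v
        dsimp at hn
        rw [hzdef]
        show (c.ι.app j).app (op X) ((F.obj j).map e₀.op v) = u
        rw [hn, hv', hu]
      -- identify z and v at a later stage
      have heq : (((evaluation Cᵒᵖ (Type u)).obj (op X)).mapCocone c).ι.app j z
          = (((evaluation Cᵒᵖ (Type u)).obj (op X)).mapCocone c).ι.app j v := by
        show (c.ι.app j).app (op X) z = (c.ι.app j).app (op X) v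
        rw [hz, hv']
      obtain ⟨j', w, hw⟩ := exists_eq_map T hev heq
      have hw' : (F.map w).app (op X) z = (F.map w).app (op X) v := hw
      set v' : (F.obj j').obj (op X) := (F.map w).app (op X) z with hv'def
      have hzfix : (F.obj j).map e₀.op z = z := by
        rw [hzdef]
        show (F.obj j).map e₀.op ((F.obj j).map e₀.op v) = (F.obj j).map e₀.op v
        rw [← FunctorToTypes.map_comp_apply, hop]
      have hfix : (F.obj j').map e₀.op v' = v' := by
        have hn := ConcreteCategory.congr_hom ((F.map w).naturality e₀.op) z
        dsimp at hn
        rw [hv'def]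
        show (F.obj j').map e₀.op ((F.map w).app (op X) z) = (F.map w).app (op X) z
        rw [← hn, hzfix]
      refine ⟨j', ⟨v', hfix⟩, ?_⟩
      apply Subtype.ext
      show u = (c.ι.app j').app (op X) v'
      have hcw := ConcreteCategory.congr_hom (NatTrans.congr_app (c.w w) (op X)) z
      dsimp at hcw
      rw [hv'def]
      show u = (c.ι.app j').app (op X) ((F.map w).app (op X) z)
      rw [hcw, hz]
    · intro j j' xi xj h
      obtain ⟨k, f, g, hfg⟩ := (Types.FilteredColimit.isColimit_eq_iff T hev).mp
        (congrArg Subtype.val h)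
      exact ⟨k, f, g, Subtype.ext hfg⟩
  -- transfer along the natural isomorphism `Hom(P, -) ≅ Fix`
  have key : ∀ (Q : Cᵒᵖ ⥤ Type u) (f : P ⟶ Q),
      Q.map e₀.op (yonedaEquiv (r ≫ f)) = yonedaEquiv (r ≫ f) := by
    intro Q f
    rw [yonedaEquiv_naturality]
    congr 1
    rw [hmap, Category.assoc]
    rw [← Category.assoc s r, hsr, Category.id_comp]
  set η : F ⋙ coyoneda.obj (op P) ≅ Sfix := NatIso.ofComponents (fun j =>
    { hom := TypeCat.ofHom (fun f => ⟨yonedaEquiv (r ≫ f), key _ f⟩)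
      inv := TypeCat.ofHom (fun u => s ≫ yonedaEquiv.symm u.1)
      hom_inv_id := by
        ext f
        dsimp
        rw [Equiv.symm_apply_apply, ← Category.assoc, hsr, Category.id_comp]
      inv_hom_id := by
        refine ConcreteCategory.hom_ext _ _ (fun u => ?_)
        apply Subtype.ext
        dsimp
        rw [← Category.assoc, ← hmap, ← yonedaEquiv_naturality,
          Equiv.apply_symm_apply, u.2] })
    (by
      intro j j' w
      refine ConcreteCategory.hom_ext _ _ (fun f => ?_)
      apply Subtype.ext
      show yonedaEquiv (r ≫ f ≫ F.map w) = (F.map w).app (op X) (yonedaEquiv (r ≫ f))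
      rw [← Category.assoc, yonedaEquiv_comp]) with hη
  have hpre : IsColimit ((Cocone.precompose η.hom).obj cS) :=
    (IsColimit.precomposeHomEquiv η cS).symm hS
  refine ⟨IsColimit.ofIsoColimit hpre (Cocones.ext ?_ ?_)⟩
  · exact
      { hom := TypeCat.ofHom (fun u => s ≫ yonedaEquiv.symm u.1)
        inv := TypeCat.ofHom (fun f => ⟨yonedaEquiv (r ≫ f), key _ f⟩)
        hom_inv_id := by
          refine ConcreteCategory.hom_ext _ _ (fun u => ?_)
          apply Subtype.ext
          dsimp
          rw [← Category.assoc, ← hmap, ← yonedaEquiv_naturality,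
            Equiv.apply_symm_apply, u.2]
        inv_hom_id := by
          ext f
          dsimp
          rw [Equiv.symm_apply_apply, ← Category.assoc, hsr, Category.id_comp] }
  · intro j
    ext f
    show s ≫ yonedaEquiv.symm ((c.ι.app j).app (op X) (yonedaEquiv (r ≫ f)))
        = f ≫ c.ι.app j
    rw [← yonedaEquiv_comp, Equiv.symm_apply_apply, ← Category.assoc,
      ← Category.assoc, hsr, Category.id_comp]

end Retract



section KaroubiPresheaf

variable {C : Type u} [SmallCategory C]

/-- The explicit "image of the idempotent" presheaf associated to a Karoubi object. -/
@[simps]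
def karoubiPresheaf : Karoubi C ⥤ (Cᵒᵖ ⥤ Type u) where
  obj W :=
    { obj := fun co => {g : co.unop ⟶ W.X // g ≫ W.p = g}
      map := fun f => TypeCat.ofHom (fun g => ⟨f.unop ≫ g.1, by rw [Category.assoc, g.2]⟩)
      map_id := by
        intro co
        refine ConcreteCategory.hom_ext _ _ (fun g => ?_)
        apply Subtype.ext
        simp
      map_comp := by
        intro co co' co'' f f'
        refine ConcreteCategory.hom_ext _ _ (fun g => ?_)
        apply Subtype.ext
        simp }
  map {W W'} h :=
    { app := fun co => TypeCat.ofHom (fun g => ⟨g.1 ≫ h.f, by rw [Category.assoc, Karoubi.comp_p]⟩)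
      naturality := by
        intro co co' f
        refine ConcreteCategory.hom_ext _ _ (fun g => ?_)
        apply Subtype.ext
        simp }
  map_id := by
    intro W
    ext co g
    show g.1 ≫ (𝟙 W : W ⟶ W).f = g.1
    rw [Karoubi.id_f, g.2]
  map_comp := by
    intro W W' W'' h h'
    ext co g
    show g.1 ≫ (h ≫ h').f = (g.1 ≫ h.f) ≫ h'.f
    rw [Karoubi.comp_f, Category.assoc]

/-- The section of the retraction exhibiting `karoubiPresheaf W` as retract of `yoneda W.X`. -/
@[simps]
def karoubiSection (W : Karoubi C) : karoubiPresheaf.obj W ⟶ yoneda.obj W.X where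
  app co := TypeCat.ofHom (fun g => g.1)
  naturality co co' f := rfl

@[simps]
def karoubiRetraction (W : Karoubi C) : yoneda.obj W.X ⟶ karoubiPresheaf.obj W where
  app co := TypeCat.ofHom (fun g => ⟨g ≫ W.p, by rw [Category.assoc, W.idem]⟩)
  naturality co co' f := by
    refine ConcreteCategory.hom_ext _ _ (fun g => ?_)
    apply Subtype.ext
    show (f.unop ≫ g) ≫ W.p = f.unop ≫ g ≫ W.p
    rw [Category.assoc]

lemma karoubi_section_retraction (W : Karoubi C) :
    karoubiSection W ≫ karoubiRetraction W = 𝟙 (karoubiPresheaf.obj W) := by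
  ext co g
  apply Subtype.ext
  show g.1 ≫ W.p = g.1
  exact g.2

instance : (karoubiPresheaf (C := C)).Faithful := by
  constructor
  intro W W' h h' heq
  apply Karoubi.hom_ext
  have := ConcreteCategory.congr_hom (NatTrans.congr_app heq (op W.X)) ⟨W.p, W.idem⟩
  have h1 : W.p ≫ h.f = W.p ≫ h'.f := congrArg Subtype.val this
  rw [Karoubi.p_comp, Karoubi.p_comp] at h1
  exact h1

instance : (karoubiPresheaf (C := C)).Full := by
  constructor
  intro W W' η
  set h₀ : W.X ⟶ W'.X := (η.app (op W.X) ⟨W.p, W.idem⟩).1 with hh₀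
  have hq : h₀ ≫ W'.p = h₀ := (η.app (op W.X) ⟨W.p, W.idem⟩).2
  refine ⟨⟨W.p ≫ h₀, ?_⟩, ?_⟩
  · rw [Category.assoc, hq, ← Category.assoc, W.idem]
  · ext co g
    apply Subtype.ext
    show g.1 ≫ W.p ≫ h₀ = (η.app co g).1
    have hnat := ConcreteCategory.congr_hom (η.naturality g.1.op) ⟨W.p, W.idem⟩
    have hnat' : (η.app co ((karoubiPresheaf.obj W).map g.1.op ⟨W.p, W.idem⟩)).1
        = ((karoubiPresheaf.obj W').map g.1.op (η.app (op W.X) ⟨W.p, W.idem⟩)).1 :=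
      congrArg Subtype.val hnat
    have harg : (karoubiPresheaf.obj W).map g.1.op ⟨W.p, W.idem⟩ = g := by
      apply Subtype.ext
      show g.1 ≫ W.p = g.1
      exact g.2
    rw [harg] at hnat'
    rw [hnat']
    show g.1 ≫ W.p ≫ h₀ = g.1 ≫ h₀
    rw [← Category.assoc, g.2]

end KaroubiPresheaf


section Sub

variable {C : Type u} [SmallCategory C]

/-- Objects of `Ind_κ(C)` that are retracts of representables are `κ`-compact there. -/
lemma subcompact {κ : Cardinal.{u}} (hκ : Cardinal.IsRegular κ)
    {P : Cᵒᵖ ⥤ Type u} (hP : IsIndKappaObject κ P) {X : C}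
    (s : P ⟶ yoneda.obj X) (r : yoneda.obj X ⟶ P) (hsr : s ≫ r = 𝟙 P) :
    KappaCompact κ (⟨P, hP⟩ : ObjectProperty.FullSubcategory (IsIndKappaObject (C := C) κ)) := by
  intro J _ hJ F c hcne
  obtain ⟨hc⟩ := hcne
  haveI hclosed : ObjectProperty.IsClosedUnderColimitsOfShape (IsIndKappaObject (C := C) κ) J := by
    constructor
    rintro X ⟨h⟩
    exact closure hκ hJ h.diag h.prop_diag_obj h.isColimit
  haveI : CreatesColimitsOfShape J (ObjectProperty.ι (IsIndKappaObject (C := C) κ)) := inferInstance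
  have hcPsh : IsColimit
      ((ObjectProperty.ι (IsIndKappaObject (C := C) κ)).mapCocone c) :=
    isColimitOfPreserves _ hc
  obtain ⟨hres⟩ := isColimit_coyoneda_of_retract hκ hJ s r hsr
    (F ⋙ ObjectProperty.ι _) ((ObjectProperty.ι _).mapCocone c) hcPsh
  let eC : coyoneda.obj (op (⟨P, hP⟩ : ObjectProperty.FullSubcategory (IsIndKappaObject (C := C) κ))) ≅
      ObjectProperty.ι _ ⋙ coyoneda.obj (op P) :=
    NatIso.ofComponents (fun Y => Equiv.toIso (ObjectProperty.fullyFaithfulι _).homEquiv)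
      (by intros; rfl)
  exact ⟨IsColimit.mapCoconeEquiv eC.symm hres⟩

end Sub


section Final

variable {C : Type u} [SmallCategory C] (κ : Cardinal.{u})

lemma karoubi_retraction_section (W : Karoubi C) :
    karoubiRetraction W ≫ karoubiSection W = yoneda.map W.p := by
  ext co g
  rfl

lemma karoubi_sec_p_ret (W : Karoubi C) :
    karoubiSection W ≫ yoneda.map W.p ≫ karoubiRetraction W = 𝟙 (karoubiPresheaf.obj W) := by
  ext co g
  apply Subtype.ext
  show (g.1 ≫ W.p) ≫ W.p = g.1
  rw [Category.assoc, W.idem, g.2]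

/-- The equivalence functor `Karoubi C ⥤ Ind_κ(C)^κ`. -/
noncomputable def theFunctor (hκ : κ.IsRegular) :
    Karoubi C ⥤ ObjectProperty.FullSubcategory
      (fun Y : ObjectProperty.FullSubcategory (IsIndKappaObject (C := C) κ) => KappaCompact κ Y) :=
  ObjectProperty.lift _
    (ObjectProperty.lift _ karoubiPresheaf
      (fun W => ind_of_retract κ (karoubiSection W) (karoubiRetraction W)
        (karoubi_section_retraction W)))
    (fun W => subcompact hκ _ (karoubiSection W) (karoubiRetraction W)
      (karoubi_section_retraction W))

lemma theFunctor_full (hκ : κ.IsRegular) : (theFunctor (C := C) κ hκ).Full := by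
  unfold theFunctor
  infer_instance

lemma theFunctor_faithful (hκ : κ.IsRegular) : (theFunctor (C := C) κ hκ).Faithful := by
  unfold theFunctor
  infer_instance

lemma theFunctor_essSurj (hκ : κ.IsRegular) : (theFunctor (C := C) κ hκ).EssSurj := by
  constructor
  rintro ⟨⟨P, hInd⟩, hCpt⟩
  obtain ⟨K, hK, d, c₀, ⟨hc₀⟩, ⟨φ⟩⟩ := id hInd
  set FdSub : (K : Type u) ⥤ ObjectProperty.FullSubcategory (IsIndKappaObject (C := C) κ) :=
    ObjectProperty.lift _ (d ⋙ yoneda)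
      (fun k => ind_of_retract κ (𝟙 _) (𝟙 _) (Category.id_comp _)) with hFdSub
  set tS : Cocone FdSub :=
    { pt := ⟨P, hInd⟩
      ι :=
        { app := fun k => ObjectProperty.homMk (c₀.ι.app k ≫ φ.hom : (d ⋙ yoneda).obj k ⟶ P)
          naturality := by
            intro k k' w
            ext1
            show (d ⋙ yoneda).map w ≫ c₀.ι.app k' ≫ φ.hom = (c₀.ι.app k ≫ φ.hom) ≫ 𝟙 _
            rw [← Category.assoc, c₀.w w, Category.comp_id] } } with htS
  have hPsh : IsColimit
      ((ObjectProperty.ι (IsIndKappaObject (C := C) κ)).mapCocone tS) :=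
    IsColimit.ofIsoColimit hc₀ (Cocones.ext φ (fun k => rfl))
  have htSS : IsColimit tS := isColimitOfReflects (ObjectProperty.ι _) hPsh
  obtain ⟨hcoy⟩ := hCpt K hK FdSub tS ⟨htSS⟩
  obtain ⟨k, f, hf⟩ := Types.jointly_surjective _ hcoy
    (𝟙 (⟨P, hInd⟩ : ObjectProperty.FullSubcategory (IsIndKappaObject (C := C) κ)))
  let sP : P ⟶ yoneda.obj (d.obj k) := f.hom
  let rP : yoneda.obj (d.obj k) ⟶ P := c₀.ι.app k ≫ φ.hom
  have hsr : sP ≫ rP = 𝟙 P := congrArg (fun g => g.hom) hf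
  set e₀ : d.obj k ⟶ d.obj k := yoneda.preimage (rP ≫ sP) with he₀def
  have hmap : yoneda.map e₀ = rP ≫ sP := Functor.map_preimage _ _
  have he₀ : e₀ ≫ e₀ = e₀ := by
    apply yoneda.map_injective
    rw [Functor.map_comp, hmap]
    calc (rP ≫ sP) ≫ rP ≫ sP = rP ≫ (sP ≫ rP) ≫ sP := by simp
      _ = rP ≫ sP := by rw [hsr, Category.id_comp]
  set W : Karoubi C := ⟨d.obj k, e₀, he₀⟩ with hW
  have hrs : karoubiRetraction W ≫ karoubiSection W = yoneda.map e₀ :=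
    karoubi_retraction_section W
  have hsecret : karoubiSection W ≫ yoneda.map e₀ ≫ karoubiRetraction W
      = 𝟙 (karoubiPresheaf.obj W) := karoubi_sec_p_ret W
  let a : karoubiPresheaf.obj W ⟶ P := karoubiSection W ≫ rP
  let b : P ⟶ karoubiPresheaf.obj W := sP ≫ karoubiRetraction W
  have hab : a ≫ b = 𝟙 (karoubiPresheaf.obj W) := by
    show (karoubiSection W ≫ rP) ≫ sP ≫ karoubiRetraction W = 𝟙 _
    rw [Category.assoc, ← Category.assoc rP sP, ← hmap]
    exact hsecret
  have hba : b ≫ a = 𝟙 P := by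
    show (sP ≫ karoubiRetraction W) ≫ karoubiSection W ≫ rP = 𝟙 P
    rw [Category.assoc, ← Category.assoc (karoubiRetraction W), hrs, hmap]
    calc sP ≫ (rP ≫ sP) ≫ rP = (sP ≫ rP) ≫ sP ≫ rP := by simp
      _ = 𝟙 P := by rw [hsr]; simp
  exact ⟨W, ⟨ObjectProperty.isoMk _ (ObjectProperty.isoMk _
    { hom := a, inv := b, hom_inv_id := hab, inv_hom_id := hba })⟩⟩


/-- The canonical lift of `yoneda` to `Ind_κ(C)`. -/
noncomputable def theEmbedding :
    C ⥤ ObjectProperty.FullSubcategory (IsIndKappaObject (C := C) κ) :=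
  ObjectProperty.lift _ yoneda
    (fun X => ind_of_retract κ (𝟙 _) (𝟙 _) (Category.id_comp _))

noncomputable def theNatIso (hκ : κ.IsRegular) :
    toKaroubi C ⋙ theFunctor κ hκ ⋙
      ObjectProperty.ι
        (fun Y : ObjectProperty.FullSubcategory (IsIndKappaObject (C := C) κ) => KappaCompact κ Y) ≅
      theEmbedding κ :=
  NatIso.ofComponents
    (fun X => ObjectProperty.isoMk _
      { hom := karoubiSection ((toKaroubi C).obj X)
        inv := karoubiRetraction ((toKaroubi C).obj X)
        hom_inv_id := karoubi_section_retraction _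
        inv_hom_id := by
          show karoubiRetraction ((toKaroubi C).obj X) ≫ karoubiSection _
              = 𝟙 (yoneda.obj X)
          rw [karoubi_retraction_section]
          show yoneda.map (𝟙 X) = 𝟙 _
          simp })
    (by
      intro X Y g
      ext1
      show karoubiPresheaf.map ((toKaroubi C).map g) ≫ karoubiSection _
          = karoubiSection _ ≫ yoneda.map g
      ext co h
      rfl)

end Final
end Stmt19Aux

open Stmt19Aux in
/-- Let `C` be a small category and `κ` a regular cardinal.  The canonical
embedding `i : C ⥤ Ind_κ(C)` (lifting the Yoneda embedding) lands in the `κ`-compact objects,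
and induces an equivalence between the idempotent completion (Karoubi envelope) of `C` and the
full subcategory `Ind_κ(C)^κ` of `κ`-compact objects; in particular, if `C` is
idempotent-complete, `i` induces an equivalence `C ≌ Ind_κ(C)^κ`. -/
theorem stmt19 {C : Type u} [SmallCategory C] (κ : Cardinal.{u}) (hκ : κ.IsRegular) :
    ∃ i : C ⥤ ObjectProperty.FullSubcategory (IsIndKappaObject (C := C) κ),
      i ⋙ ObjectProperty.ι _ = yoneda ∧
      (∀ X : C, KappaCompact κ (i.obj X)) ∧
      (∃ e : Karoubi C ⥤
          ObjectProperty.FullSubcategory (fun Y : ObjectProperty.FullSubcategory (IsIndKappaObject (C := C) κ) =>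
            KappaCompact κ Y),
        e.IsEquivalence ∧
          Nonempty (toKaroubi C ⋙ e ⋙ ObjectProperty.ι _ ≅ i)) ∧
      (IsIdempotentComplete C →
        ∃ e' : C ⥤ ObjectProperty.FullSubcategory (fun Y : ObjectProperty.FullSubcategory (IsIndKappaObject (C := C) κ) =>
            KappaCompact κ Y),
          e'.IsEquivalence ∧ Nonempty (e' ⋙ ObjectProperty.ι _ ≅ i)) := by
  haveI := theFunctor_full (C := C) κ hκ
  haveI := theFunctor_faithful (C := C) κ hκ
  haveI := theFunctor_essSurj (C := C) κ hκ
  have heq : (theFunctor (C := C) κ hκ).IsEquivalence := {}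
  refine ⟨theEmbedding κ, rfl, ?_, ?_, ?_⟩
  · intro X
    exact subcompact hκ (ind_of_retract κ (𝟙 _) (𝟙 _) (Category.id_comp _))
      (𝟙 _) (𝟙 _) (Category.id_comp _)
  · exact ⟨theFunctor κ hκ, heq, ⟨theNatIso κ hκ⟩⟩
  · intro hC
    haveI := hC
    haveI := heq
    refine ⟨toKaroubi C ⋙ theFunctor κ hκ, inferInstance, ⟨?_⟩⟩
    exact Functor.associator _ _ _ ≪≫ theNatIso κ hκ
end
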